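/- arXiv:1102.4656 — 8 statements merged into one kernel-verified Lean document; each statement's English description precedes it below -/
import Mathlib

section
/- Let ℓ be an odd prime, n ≥ 1, and α ∈ GL₂(ℤ_ℓ) with tr(α)² − 4·det(α) ∈ ℤ_ℓ^×. Let R be the ℤ_ℓ-subalgebra of M₂(ℤ_ℓ) generated by α and let ᾱ be the image of α in GL₂(ℤ/ℓⁿℤ). Then the centralizer of ᾱ in GL₂(ℤ/ℓⁿℤ) equals the unit group (R/ℓⁿR)^×. -/
open Matrix

/-- Reduction `GL₂(ℤ_ℓ) → GL₂(ℤ/ℓⁿℤ)`. -/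
noncomputable def redGL (ℓ : ℕ) [Fact (Nat.Prime ℓ)] (n : ℕ) :
    GL (Fin 2) ℤ_[ℓ] →* GL (Fin 2) (ZMod (ℓ ^ n)) :=
  Units.map ((PadicInt.toZModPow n).mapMatrix).toMonoidHom

/-- The image `R/ℓⁿR ⊆ M₂(ℤ/ℓⁿℤ)` of the `ℤ_ℓ`-subalgebra `R` of `M₂(ℤ_ℓ)`
generated by `α`. -/
noncomputable def Rbar (ℓ : ℕ) [Fact (Nat.Prime ℓ)] (n : ℕ) (α : GL (Fin 2) ℤ_[ℓ]) :
    Subring (Matrix (Fin 2) (Fin 2) (ZMod (ℓ ^ n))) :=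
  (Subalgebra.toSubring
    (Algebra.adjoin ℤ_[ℓ] {(α : Matrix (Fin 2) (Fin 2) ℤ_[ℓ])})).map
      ((PadicInt.toZModPow n).mapMatrix)

/-- The unit group `S^×` of a subring `S` of a matrix ring, viewed as the
subgroup of `GL` consisting of the invertible matrices `g` with both `g` and
`g⁻¹` in `S`. -/
def unitsOf {n : Type*} [DecidableEq n] [Fintype n] {A : Type*} [CommRing A]
    (S : Subring (Matrix n n A)) : Subgroup (GL n A) where
  carrier := {g | ((g : GL n A) : Matrix n n A) ∈ S ∧
    ((g⁻¹ : GL n A) : Matrix n n A) ∈ S}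
  one_mem' := ⟨S.one_mem, by simpa using S.one_mem⟩
  mul_mem' := by
    rintro a b ⟨ha1, ha2⟩ ⟨hb1, hb2⟩
    refine ⟨by simpa using S.mul_mem ha1 hb1, ?_⟩
    simpa [_root_.mul_inv_rev] using S.mul_mem hb2 ha2
  inv_mem' := by
    rintro a ⟨h1, h2⟩
    exact ⟨h2, by simpa using h1⟩


open Polynomial

section Aux

variable {ℓ : ℕ} [Fact (Nat.Prime ℓ)] {n : ℕ}

lemma aux_neZero : NeZero (ℓ ^ n) :=
  ⟨pow_ne_zero n (Fact.out (p := Nat.Prime ℓ)).pos.ne'⟩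

/-- unit criterion via reduction mod ℓ -/
lemma aux_isUnit_iff (hn : 1 ≤ n) (x : ZMod (ℓ ^ n)) :
    IsUnit x ↔ (ZMod.castHom (dvd_pow_self ℓ (by omega : n ≠ 0)) (ZMod ℓ)) x ≠ 0 := by
  haveI := aux_neZero (ℓ := ℓ) (n := n)
  have hp : Nat.Prime ℓ := Fact.out
  constructor
  · intro h h0
    have := h.map (ZMod.castHom (dvd_pow_self ℓ (by omega : n ≠ 0)) (ZMod ℓ))
    rw [h0] at this
    exact (by simp at this : False)
  · intro h
    have hx : x = ((x.val : ℕ) : ZMod (ℓ ^ n)) := (ZMod.natCast_zmod_val x).symm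
    rw [hx, ZMod.isUnit_iff_coprime]
    apply Nat.Coprime.pow_right
    rw [Nat.coprime_comm, hp.coprime_iff_not_dvd]
    intro hdvd
    apply h
    rw [hx]
    simp only [map_natCast]
    exact (ZMod.natCast_eq_zero_iff _ _).2 hdvd

end Aux

section Commutant

variable {A : Type*} [CommRing A]

/-- If `v, Mv` is a basis and `g` commutes with `M`, then `g ∈ A[M]`. -/
lemma commutant_mem (M g : Matrix (Fin 2) (Fin 2) A) (v : Fin 2 → A)
    (hP : IsUnit (Matrix.of ![![v 0, M.mulVec v 0], ![v 1, M.mulVec v 1]]).det)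
    (hcomm : g * M = M * g) : ∃ a b : A, g = a • 1 + b • M := by
  set P : Matrix (Fin 2) (Fin 2) A := Matrix.of ![![v 0, M.mulVec v 0], ![v 1, M.mulVec v 1]]
    with hPdef
  set w : Fin 2 → A := P⁻¹.mulVec (g.mulVec v) with hw
  have hPw : P.mulVec w = g.mulVec v := by
    rw [hw, Matrix.mulVec_mulVec, Matrix.mul_nonsing_inv P hP, Matrix.one_mulVec]
  set h : Matrix (Fin 2) (Fin 2) A := w 0 • 1 + w 1 • M with hh
  have hhM : h * M = M * h := by
    simp only [hh, add_mul, mul_add, Matrix.smul_mul, Matrix.mul_smul, one_mul, mul_one]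
  have hhv : h.mulVec v = g.mulVec v := by
    rw [← hPw]
    funext i
    simp [hh, hPdef, Matrix.mulVec, dotProduct, Fin.sum_univ_two, Matrix.add_apply,
      Matrix.smul_apply, Matrix.one_apply, add_mul, mul_comm]
    fin_cases i <;>
      simp [Matrix.mulVec, dotProduct, Fin.sum_univ_two, mul_comm] <;> ring
  set D : Matrix (Fin 2) (Fin 2) A := h - g with hD
  have hDv : D.mulVec v = 0 := by
    rw [hD, Matrix.sub_mulVec, hhv, sub_self]
  have hDMv : D.mulVec (M.mulVec v) = 0 := by
    have hDM : D * M = M * D := by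
      rw [hD, Matrix.sub_mul, Matrix.mul_sub, hhM, hcomm]
    rw [Matrix.mulVec_mulVec, hDM, ← Matrix.mulVec_mulVec, hDv, Matrix.mulVec_zero]
  have hDP : D * P = 0 := by
    ext i j
    fin_cases j
    · have := congrFun hDv i
      simpa [Matrix.mul_apply, Matrix.mulVec, dotProduct, Fin.sum_univ_two, hPdef]
        using this
    · have := congrFun hDMv i
      simpa [Matrix.mul_apply, Matrix.mulVec, dotProduct, Fin.sum_univ_two, hPdef]
        using this
  have hD0 : D = 0 := by
    calc D = D * (P * P⁻¹) := by rw [Matrix.mul_nonsing_inv P hP, mul_one]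
    _ = (D * P) * P⁻¹ := by rw [mul_assoc]
    _ = 0 := by rw [hDP, zero_mul]
  refine ⟨w 0, w 1, ?_⟩
  have := sub_eq_zero.mp hD0
  rw [← this, hh]

end Commutant

section Cyclic

variable {ℓ : ℕ} [Fact (Nat.Prime ℓ)] {n : ℕ}

lemma exists_cyclic (hn : 1 ≤ n) (M : Matrix (Fin 2) (Fin 2) (ZMod (ℓ ^ n)))
    (hdisc : IsUnit (M.trace ^ 2 - 4 * M.det)) :
    ∃ v : Fin 2 → ZMod (ℓ ^ n),
      IsUnit (Matrix.of ![![v 0, M.mulVec v 0], ![v 1, M.mulVec v 1]]).det := by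
  set π := ZMod.castHom (dvd_pow_self ℓ (by omega : n ≠ 0)) (ZMod ℓ) with hπ
  set a := M 0 0; set b := M 0 1; set c := M 1 0; set d := M 1 1
  by_cases hc : IsUnit c
  · refine ⟨![1, 0], ?_⟩
    simp only [Matrix.cons_val_zero, Matrix.cons_val_one, Matrix.head_cons]
    have : (Matrix.of ![![(1:ZMod (ℓ^n)), M.mulVec ![1,0] 0], ![0, M.mulVec ![1,0] 1]]).det
        = c := by
      simp [Matrix.det_fin_two, Matrix.mulVec, dotProduct, Fin.sum_univ_two]
      rfl
    rwa [this]
  by_cases hb : IsUnit b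
  · refine ⟨![0, 1], ?_⟩
    simp only [Matrix.cons_val_zero, Matrix.cons_val_one, Matrix.head_cons]
    have : (Matrix.of ![![(0:ZMod (ℓ^n)), M.mulVec ![0,1] 0], ![1, M.mulVec ![0,1] 1]]).det
        = -b := by
      simp [Matrix.det_fin_two, Matrix.mulVec, dotProduct, Fin.sum_univ_two]
      rfl
    rw [this]
    exact hb.neg
  · refine ⟨![1, 1], ?_⟩
    simp only [Matrix.cons_val_zero, Matrix.cons_val_one, Matrix.head_cons]
    have hdet : (Matrix.of ![![(1:ZMod (ℓ^n)), M.mulVec ![1,1] 0], ![1, M.mulVec ![1,1] 1]]).det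
        = (c + d) - (a + b) := by
      simp [Matrix.det_fin_two, Matrix.mulVec, dotProduct, Fin.sum_univ_two]
      rfl
    rw [hdet, aux_isUnit_iff hn]
    rw [aux_isUnit_iff hn] at hdisc
    have hb0 : π b = 0 := by
      by_contra h0; exact hb ((aux_isUnit_iff hn b).2 h0)
    have hc0 : π c = 0 := by
      by_contra h0; exact hc ((aux_isUnit_iff hn c).2 h0)
    have hId : M.trace ^ 2 - 4 * M.det = (a - d) ^ 2 + 4 * (b * c) := by
      rw [Matrix.trace_fin_two, Matrix.det_fin_two]; ring
    rw [hId] at hdisc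
    have had : π (a - d) ≠ 0 := by
      intro h0
      apply hdisc
      rw [map_add, map_pow, h0, _root_.map_mul, _root_.map_mul, hb0, hc0]
      ring
    intro h0
    apply had
    have : π ((c + d) - (a + b)) = π d - π a := by
      rw [map_sub, map_add, map_add, hb0, hc0]; ring
    rw [this] at h0
    rw [map_sub]
    have : π d = π a := by linear_combination h0
    rw [this]; ring

end Cyclic

section RbarMem

variable {ℓ : ℕ} [Fact (Nat.Prime ℓ)] {n : ℕ}

lemma mem_Rbar_iff (hn : 1 ≤ n) (α : GL (Fin 2) ℤ_[ℓ])
    (x : Matrix (Fin 2) (Fin 2) (ZMod (ℓ ^ n))) :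
    x ∈ Rbar ℓ n α ↔ ∃ a b : ZMod (ℓ ^ n),
      x = a • 1 + b • ((α : Matrix (Fin 2) (Fin 2) ℤ_[ℓ]).map (PadicInt.toZModPow n)) := by
  haveI := aux_neZero (ℓ := ℓ) (n := n)
  haveI : Fact (1 < ℓ ^ n) :=
    ⟨Nat.one_lt_pow (by omega) (Fact.out (p := Nat.Prime ℓ)).one_lt⟩
  set φ : ℤ_[ℓ] →+* ZMod (ℓ ^ n) := PadicInt.toZModPow n with hφ
  set αm : Matrix (Fin 2) (Fin 2) ℤ_[ℓ] := (α : Matrix (Fin 2) (Fin 2) ℤ_[ℓ]) with hαm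
  set M : Matrix (Fin 2) (Fin 2) (ZMod (ℓ ^ n)) := αm.map φ with hM
  have hcomp : (φ.mapMatrix).comp (algebraMap ℤ_[ℓ] (Matrix (Fin 2) (Fin 2) ℤ_[ℓ]))
      = (algebraMap (ZMod (ℓ ^ n)) (Matrix (Fin 2) (Fin 2) (ZMod (ℓ ^ n)))).comp φ := by
    refine RingHom.ext fun r => ?_
    ext i j
    simp [Matrix.algebraMap_matrix_apply, apply_ite φ]
  constructor
  · intro hx
    obtain ⟨y, hy, rfl⟩ := Subring.mem_map.mp hx
    rw [Subalgebra.mem_toSubring, Algebra.adjoin_singleton_eq_range_aeval] at hy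
    rw [AlgHom.mem_range] at hy
    obtain ⟨p, rfl⟩ := hy
    have key : φ.mapMatrix (Polynomial.aeval αm p) = Polynomial.aeval M (p.map φ) := by
      rw [Polynomial.aeval_def, Polynomial.hom_eval₂, hcomp, Polynomial.aeval_def,
        Polynomial.eval₂_map]
      rfl
    set q : (ZMod (ℓ ^ n))[X] := (p.map φ) %ₘ (Matrix.charpoly M) with hq
    have key2 : Polynomial.aeval M (p.map φ) = Polynomial.aeval M q :=
      Matrix.aeval_eq_aeval_mod_charpoly M (p.map φ)
    have hdeg : q.degree ≤ 1 := by
      have h2 : q.degree < 2 := by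
        have := Polynomial.degree_modByMonic_lt (p.map φ) (Matrix.charpoly_monic M)
        rwa [Matrix.charpoly_degree_eq_dim, Fintype.card_fin] at this
      by_contra hle
      push_neg at hle
      have := Nat.WithBot.add_one_le_of_lt hle
      rw [show ((1 : WithBot ℕ) + 1) = 2 from by norm_num] at this
      exact absurd h2 (not_lt.mpr this)
    have hqeq : q = Polynomial.C (q.coeff 1) * Polynomial.X + Polynomial.C (q.coeff 0) :=
      Polynomial.eq_X_add_C_of_degree_le_one hdeg
    refine ⟨q.coeff 0, q.coeff 1, ?_⟩
    rw [RingHom.mapMatrix_apply] at key ⊢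
    conv_lhs => rw [key, key2, hqeq]
    simp only [map_add, _root_.map_mul, Polynomial.aeval_C, Polynomial.aeval_X]
    rw [Algebra.algebraMap_eq_smul_one, Algebra.algebraMap_eq_smul_one, smul_mul_assoc, one_mul,
      add_comm]
  · rintro ⟨a, b, rfl⟩
    refine Subring.mem_map.mpr ⟨(a.val : ℤ_[ℓ]) • 1 + (b.val : ℤ_[ℓ]) • αm, ?_, ?_⟩
    · refine Subalgebra.mem_toSubring.mpr (add_mem ?_ ?_)
      · exact Subalgebra.smul_mem _ (one_mem _) _
      · exact Subalgebra.smul_mem _ (Algebra.self_mem_adjoin_singleton ℤ_[ℓ] αm) _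
    · rw [RingHom.mapMatrix_apply]
      ext i j
      simp [Matrix.map_apply, Matrix.add_apply, Matrix.smul_apply, smul_eq_mul,
        ZMod.natCast_zmod_val, hφ, hM, Matrix.one_apply, apply_ite]

end RbarMem


/-- For an odd prime `ℓ`, `n ≥ 1`, and `α ∈ GL₂(ℤ_ℓ)` with
`tr(α)² − 4·det(α) ∈ ℤ_ℓ^×`, the centralizer of the reduction `ᾱ` of `α` in
`GL₂(ℤ/ℓⁿℤ)` is the Cartan subgroup `(R/ℓⁿR)^×`, where `R` is the
`ℤ_ℓ`-subalgebra of `M₂(ℤ_ℓ)` generated by `α`. -/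
theorem stmt1 (ℓ : ℕ) [Fact (Nat.Prime ℓ)] (hodd : Odd ℓ) (n : ℕ) (hn : 1 ≤ n)
    (α : GL (Fin 2) ℤ_[ℓ])
    (hdisc : IsUnit ((Matrix.trace (α : Matrix (Fin 2) (Fin 2) ℤ_[ℓ])) ^ 2
      - 4 * Matrix.det (α : Matrix (Fin 2) (Fin 2) ℤ_[ℓ]))) :
    Subgroup.centralizer {redGL ℓ n α} = unitsOf (Rbar ℓ n α) := by

  haveI := aux_neZero (ℓ := ℓ) (n := n)
  set φ : ℤ_[ℓ] →+* ZMod (ℓ ^ n) := PadicInt.toZModPow n with hφ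
  set M : Matrix (Fin 2) (Fin 2) (ZMod (ℓ ^ n)) :=
    (α : Matrix (Fin 2) (Fin 2) ℤ_[ℓ]).map φ with hM
  have hred : ((redGL ℓ n α : GL (Fin 2) (ZMod (ℓ ^ n))) :
      Matrix (Fin 2) (Fin 2) (ZMod (ℓ ^ n))) = M := rfl
  have hMdisc : IsUnit (M.trace ^ 2 - 4 * M.det) := by
    have htr : M.trace = φ ((α : Matrix (Fin 2) (Fin 2) ℤ_[ℓ]).trace) := by
      simp [Matrix.trace, Matrix.diag, hM, Matrix.map_apply, map_sum]
    have key : M.trace ^ 2 - 4 * M.det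
        = φ ((α : Matrix (Fin 2) (Fin 2) ℤ_[ℓ]).trace ^ 2
          - 4 * (α : Matrix (Fin 2) (Fin 2) ℤ_[ℓ]).det) := by
      rw [map_sub, map_pow, _root_.map_mul, RingHom.map_det, htr, map_ofNat,
        RingHom.mapMatrix_apply]
    rw [key]
    exact hdisc.map φ
  obtain ⟨v, hv⟩ := exists_cyclic hn M hMdisc
  have hmem : ∀ g : GL (Fin 2) (ZMod (ℓ ^ n)), g ∈ unitsOf (Rbar ℓ n α) ↔
      (((g : GL (Fin 2) (ZMod (ℓ ^ n))) : Matrix (Fin 2) (Fin 2) (ZMod (ℓ ^ n))) ∈ Rbar ℓ n α ∧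
       ((g⁻¹ : GL (Fin 2) (ZMod (ℓ ^ n))) : Matrix (Fin 2) (Fin 2) (ZMod (ℓ ^ n))) ∈ Rbar ℓ n α) :=
    fun _ => Iff.rfl
  ext g
  rw [Subgroup.mem_centralizer_iff, hmem]
  constructor
  · intro hg
    have hcommGL : (redGL ℓ n α) * g = g * (redGL ℓ n α) := hg _ (Set.mem_singleton _)
    have hC : Commute (redGL ℓ n α) g := hcommGL
    have hcomm : (g : Matrix (Fin 2) (Fin 2) (ZMod (ℓ ^ n))) * M
        = M * (g : Matrix (Fin 2) (Fin 2) (ZMod (ℓ ^ n))) := by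
      have := congrArg Units.val hcommGL
      simpa [Units.val_mul, hred] using this.symm
    have hcomm' : ((g⁻¹ : GL (Fin 2) (ZMod (ℓ ^ n))) : Matrix (Fin 2) (Fin 2) (ZMod (ℓ ^ n))) * M
        = M * ((g⁻¹ : GL (Fin 2) (ZMod (ℓ ^ n))) : Matrix (Fin 2) (Fin 2) (ZMod (ℓ ^ n))) := by
      have := congrArg Units.val hC.inv_right.eq
      simpa [Units.val_mul, hred] using this.symm
    constructor
    · obtain ⟨a, b, hab⟩ := commutant_mem M _ v hv hcomm
      exact (mem_Rbar_iff hn α _).mpr ⟨a, b, hab⟩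
    · obtain ⟨a, b, hab⟩ := commutant_mem M _ v hv hcomm'
      exact (mem_Rbar_iff hn α _).mpr ⟨a, b, hab⟩
  · rintro ⟨h1, h2⟩ u hu
    rw [Set.mem_singleton_iff] at hu
    subst hu
    obtain ⟨a, b, hab⟩ := (mem_Rbar_iff hn α _).mp h1
    refine Units.ext ?_
    rw [Units.val_mul, Units.val_mul, hred, hab]
    simp only [Matrix.mul_add, Matrix.add_mul, Matrix.mul_smul, Matrix.smul_mul, mul_one, one_mul]
    rfl
end

section
/- Let ℓ be an odd prime, n ≥ 1, α ∈ GL₂(ℤ_ℓ) with tr(α)² − 4·det(α) ∈ ℤ_ℓ^×, R the ℤ_ℓ-subalgebra generated by α, C(ℓⁿ) = (R/ℓⁿR)^× the corresponding Cartan subgroup and C⁺(ℓⁿ) its normalizer in GL₂(ℤ/ℓⁿℤ). If g ∈ GL₂(ℤ/ℓⁿℤ) satisfies g ᾱ g⁻¹ ∈ C(ℓⁿ), where ᾱ is the reduction of α, then g ∈ C⁺(ℓⁿ). -/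
open Matrix

/-- With `ℓ` an odd prime, `n ≥ 1`, `α ∈ GL₂(ℤ_ℓ)` of unit
discriminant, `C(ℓⁿ) = (R/ℓⁿR)^×` the associated Cartan subgroup and `C⁺(ℓⁿ)`
its normalizer in `GL₂(ℤ/ℓⁿℤ)`: if `g ᾱ g⁻¹ ∈ C(ℓⁿ)` then `g ∈ C⁺(ℓⁿ)`. -/
theorem stmt2 (ℓ : ℕ) [Fact (Nat.Prime ℓ)] (hodd : Odd ℓ) (n : ℕ) (hn : 1 ≤ n)
    (α : GL (Fin 2) ℤ_[ℓ])
    (hdisc : IsUnit ((Matrix.trace (α : Matrix (Fin 2) (Fin 2) ℤ_[ℓ])) ^ 2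
      - 4 * Matrix.det (α : Matrix (Fin 2) (Fin 2) ℤ_[ℓ])))
    (g : GL (Fin 2) (ZMod (ℓ ^ n)))
    (hg : g * (redGL ℓ n α) * g⁻¹ ∈ unitsOf (Rbar ℓ n α)) :
    g ∈ Subgroup.normalizer ((unitsOf (Rbar ℓ n α) : Subgroup (GL (Fin 2) (ZMod (ℓ ^ n)))) : Set (GL (Fin 2) (ZMod (ℓ ^ n)))) := by
  classical
  haveI : NeZero (ℓ ^ n) := ⟨pow_ne_zero n (Fact.out : Nat.Prime ℓ).ne_zero⟩
  set f := RingHom.mapMatrix (m := Fin 2) (PadicInt.toZModPow (p := ℓ) n) with hf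
  set S := Rbar ℓ n α with hS
  -- conjugation by g as a function on matrices
  set φ : Matrix (Fin 2) (Fin 2) (ZMod (ℓ ^ n)) → Matrix (Fin 2) (Fin 2) (ZMod (ℓ ^ n)) :=
    fun M => (g : Matrix (Fin 2) (Fin 2) (ZMod (ℓ ^ n))) * M *
      ((g⁻¹ : GL (Fin 2) (ZMod (ℓ ^ n))) : Matrix (Fin 2) (Fin 2) (ZMod (ℓ ^ n))) with hφ
  have hginv : ((g⁻¹ : GL (Fin 2) (ZMod (ℓ ^ n))) : Matrix (Fin 2) (Fin 2) (ZMod (ℓ ^ n))) *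
      (g : Matrix (Fin 2) (Fin 2) (ZMod (ℓ ^ n))) = 1 := by
    rw [← Units.val_mul, inv_mul_cancel, Units.val_one]
  have hginv' : (g : Matrix (Fin 2) (Fin 2) (ZMod (ℓ ^ n))) *
      ((g⁻¹ : GL (Fin 2) (ZMod (ℓ ^ n))) : Matrix (Fin 2) (Fin 2) (ZMod (ℓ ^ n))) = 1 := by
    rw [← Units.val_mul, mul_inv_cancel, Units.val_one]
  have hφinj : Function.Injective φ := by
    intro x y hxy
    simp only [hφ] at hxy
    have := congrArg (fun M => ((g⁻¹ : GL (Fin 2) (ZMod (ℓ ^ n))) :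
        Matrix (Fin 2) (Fin 2) (ZMod (ℓ ^ n))) * M *
        (g : Matrix (Fin 2) (Fin 2) (ZMod (ℓ ^ n)))) hxy
    simpa [mul_assoc, hginv, hginv'] using this
  -- φ maps S into S
  have hmaps : ∀ x ∈ S, φ x ∈ S := by
    rintro _ ⟨y, hy, rfl⟩
    induction hy using Algebra.adjoin_induction with
    | mem x hx =>
        simp only [Set.mem_singleton_iff] at hx
        subst hx
        have := hg.1
        simpa [hφ, unitsOf, redGL, Units.val_mul] using this
    | algebraMap r =>
        have hfc : f ((algebraMap ℤ_[ℓ] (Matrix (Fin 2) (Fin 2) ℤ_[ℓ])) r) =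
            (PadicInt.toZModPow (p := ℓ) n r) • (1 : Matrix (Fin 2) (Fin 2) (ZMod (ℓ ^ n))) := by
          ext i j
          simp [hf, Matrix.algebraMap_matrix_apply, Matrix.smul_apply, Matrix.one_apply,
            apply_ite (PadicInt.toZModPow (p := ℓ) n)]
        rw [hfc]
        have : φ ((PadicInt.toZModPow (p := ℓ) n r) •
            (1 : Matrix (Fin 2) (Fin 2) (ZMod (ℓ ^ n)))) =
            (PadicInt.toZModPow (p := ℓ) n r) • (1 : Matrix (Fin 2) (Fin 2) (ZMod (ℓ ^ n))) := by
          simp [hφ, Matrix.mul_smul, Matrix.smul_mul, hginv']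
        rw [this, ← hfc]
        exact ⟨_, Subalgebra.algebraMap_mem _ r, rfl⟩
    | add x y hx hy ihx ihy =>
        have : φ (f (x + y)) = φ (f x) + φ (f y) := by
          simp [hφ, map_add, mul_add, add_mul]
        rw [this]; exact S.add_mem ihx ihy
    | mul x y hx hy ihx ihy =>
        have hcancel : ∀ z : Matrix (Fin 2) (Fin 2) (ZMod (ℓ ^ n)),
            ((g⁻¹ : GL (Fin 2) (ZMod (ℓ ^ n))) : Matrix (Fin 2) (Fin 2) (ZMod (ℓ ^ n))) *
            ((g : Matrix (Fin 2) (Fin 2) (ZMod (ℓ ^ n))) * z) = z := by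
          intro z; rw [← mul_assoc, hginv, one_mul]
        have : φ (f (x * y)) = φ (f x) * φ (f y) := by
          simp only [hφ, _root_.map_mul, mul_assoc, hcancel]
        rw [this]; exact S.mul_mem ihx ihy
  -- S is finite, φ is injective, so φ is a bijection of S onto itself
  have hfin : (S : Set (Matrix (Fin 2) (Fin 2) (ZMod (ℓ ^ n)))).Finite :=
    Set.toFinite _
  have hbij : Set.BijOn φ (S : Set _) (S : Set _) :=
    (hfin.injOn_iff_bijOn_of_mapsTo hmaps).mp (Function.Injective.injOn hφinj)
  have hsurj : ∀ x ∈ S, ∃ y ∈ S, φ y = x := fun x hx => hbij.surjOn hx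
  have hback : ∀ x, φ x ∈ S → x ∈ S := by
    intro x hx
    obtain ⟨y, hy, hyx⟩ := hsurj _ hx
    rwa [← hφinj hyx]
  -- conclude
  rw [Subgroup.mem_normalizer_iff]
  intro h
  have key : ∀ h : GL (Fin 2) (ZMod (ℓ ^ n)),
      ((g * h * g⁻¹ : GL (Fin 2) (ZMod (ℓ ^ n))) : Matrix (Fin 2) (Fin 2) (ZMod (ℓ ^ n))) =
      φ (h : Matrix (Fin 2) (Fin 2) (ZMod (ℓ ^ n))) := by
    intro h; simp [hφ, Units.val_mul]
  have keyinv : ∀ h : GL (Fin 2) (ZMod (ℓ ^ n)),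
      (((g * h * g⁻¹)⁻¹ : GL (Fin 2) (ZMod (ℓ ^ n))) : Matrix (Fin 2) (Fin 2) (ZMod (ℓ ^ n))) =
      φ ((h⁻¹ : GL (Fin 2) (ZMod (ℓ ^ n))) : Matrix (Fin 2) (Fin 2) (ZMod (ℓ ^ n))) := by
    intro h
    have : (g * h * g⁻¹)⁻¹ = g * h⁻¹ * g⁻¹ := by group
    rw [this]; exact key h⁻¹
  constructor
  · rintro ⟨h1, h2⟩
    exact ⟨by rw [key]; exact hmaps _ h1, by rw [keyinv]; exact hmaps _ h2⟩
  · rintro ⟨h1, h2⟩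
    rw [key] at h1; rw [keyinv] at h2
    exact ⟨hback _ h1, hback _ h2⟩
end

section
/- Let ℓ be a prime and G a closed subgroup of GL₂(ℤ_ℓ). For n ≥ 1 let G_n = {A ∈ G : A ≡ I mod ℓⁿ} and let 𝔤_n ⊆ M₂(F_ℓ) be the image of the injective map G_n/G_{n+1} → M₂(F_ℓ) sending I + ℓⁿB to B mod ℓ. If n ≥ 1 (and n ≥ 2 when ℓ = 2), then 𝔤_n ⊆ 𝔤_{n+1}. -/
open Matrix

/-- The image `𝔤_n ⊆ M₂(F_ℓ)` of `G_n/G_{n+1}` under `I + ℓⁿB ↦ B mod ℓ`,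
where `G_n = {A ∈ G : A ≡ I mod ℓⁿ}`. -/
def filt (ℓ : ℕ) [Fact (Nat.Prime ℓ)] (G : Subgroup (GL (Fin 2) ℤ_[ℓ])) (n : ℕ) :
    Set (Matrix (Fin 2) (Fin 2) (ZMod ℓ)) :=
  {B | ∃ g ∈ G, ∃ A : Matrix (Fin 2) (Fin 2) ℤ_[ℓ],
    (g : Matrix (Fin 2) (Fin 2) ℤ_[ℓ]) = 1 + ((ℓ : ℤ_[ℓ]) ^ n) • A ∧
      A.map (⇑(PadicInt.toZMod : ℤ_[ℓ] →+* ZMod ℓ)) = B}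

private lemma mul_natCast_eq_smul {ℓ : ℕ} [Fact (Nat.Prime ℓ)]
    (c : ℕ) (a : Matrix (Fin 2) (Fin 2) ℤ_[ℓ]) :
    a * (c : Matrix (Fin 2) (Fin 2) ℤ_[ℓ]) = (c : ℤ_[ℓ]) • a := by
  have h : (c : Matrix (Fin 2) (Fin 2) ℤ_[ℓ]) = c • (1 : Matrix (Fin 2) (Fin 2) ℤ_[ℓ]) := by
    simp
  rw [h, mul_smul_comm, mul_one, ← Nat.cast_smul_eq_nsmul ℤ_[ℓ]]

/-- Let `ℓ` be a prime and `G` a closed subgroup of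
`GL₂(ℤ_ℓ)`.  If `n ≥ 1` (and `n ≥ 2` when `ℓ = 2`), then `𝔤_n ⊆ 𝔤_{n+1}`. -/
theorem stmt4 (ℓ : ℕ) [Fact (Nat.Prime ℓ)] (G : Subgroup (GL (Fin 2) ℤ_[ℓ]))
    (hclosed : IsClosed (G : Set (GL (Fin 2) ℤ_[ℓ])))
    (n : ℕ) (hn : 1 ≤ n) (h2 : ℓ = 2 → 2 ≤ n) :
    filt ℓ G n ⊆ filt ℓ G (n + 1) := by
  rintro B ⟨g, hg, A, hgA, hAB⟩
  have hp : Nat.Prime ℓ := Fact.out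
  have hℓ2 : 2 ≤ ℓ := hp.two_le
  set κ : ℤ_[ℓ] := (ℓ : ℤ_[ℓ]) with hκ
  -- divisibility of the higher binomial coefficients
  have hdvd : ∀ m, 2 ≤ m → m ≤ ℓ → ℓ ^ (n + 2) ∣ ℓ ^ (n * m) * ℓ.choose m := by
    intro m hm2 hmℓ
    rcases eq_or_lt_of_le hmℓ with h | h
    · subst h
      rw [Nat.choose_self, mul_one]
      apply pow_dvd_pow
      rcases eq_or_ne m 2 with h2' | h2'
      · have := h2 h2'; nlinarith
      · have h3 : 3 ≤ m := by omega
        nlinarith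
    · have h1 : ℓ ∣ ℓ.choose m := hp.dvd_choose_self (by omega) h
      have h2' : ℓ ^ (n + 1) ∣ ℓ ^ (n * m) := pow_dvd_pow _ (by nlinarith)
      calc ℓ ^ (n + 2) = ℓ ^ (n + 1) * ℓ := by ring
        _ ∣ ℓ ^ (n * m) * ℓ.choose m := mul_dvd_mul h2' h1
  set q : ℕ → ℕ := fun m => (ℓ ^ (n * m) * ℓ.choose m) / ℓ ^ (n + 2) with hqdef
  have hq : ∀ m ∈ Finset.Ico 2 (ℓ + 1), ℓ ^ (n + 2) * q m = ℓ ^ (n * m) * ℓ.choose m := by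
    intro m hm
    simp only [Finset.mem_Ico] at hm
    exact Nat.mul_div_cancel' (hdvd m hm.1 (by omega))
  set C : Matrix (Fin 2) (Fin 2) ℤ_[ℓ] := ∑ m ∈ Finset.Ico 2 (ℓ + 1), (q m : ℤ_[ℓ]) • A ^ m with hC
  -- the key binomial computation
  have key : ((g : Matrix (Fin 2) (Fin 2) ℤ_[ℓ])) ^ ℓ = 1 + κ ^ (n + 1) • (A + κ • C) := by
    rw [hgA, add_comm (1 : Matrix (Fin 2) (Fin 2) ℤ_[ℓ]), Commute.add_pow (Commute.one_right _)]
    have hsplit : Finset.range (ℓ + 1) = Finset.Ico 0 (ℓ + 1) := by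
      rw [Finset.range_eq_Ico]
    rw [hsplit, Finset.sum_eq_sum_Ico_succ_bot (by omega),
      Finset.sum_eq_sum_Ico_succ_bot (by omega)]
    have h0 : (κ ^ n • A) ^ 0 * 1 ^ (ℓ - 0) * (ℓ.choose 0 : Matrix (Fin 2) (Fin 2) ℤ_[ℓ]) = 1 := by simp
    have h1 : (κ ^ n • A) ^ 1 * 1 ^ (ℓ - 1) * (ℓ.choose 1 : Matrix (Fin 2) (Fin 2) ℤ_[ℓ]) = κ ^ (n + 1) • A := by
      rw [pow_one, one_pow, mul_one, Nat.choose_one_right, smul_mul_assoc,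
        mul_natCast_eq_smul, smul_smul, ← hκ]
      ring_nf
    have hrest : ∑ m ∈ Finset.Ico 2 (ℓ + 1),
        (κ ^ n • A) ^ m * 1 ^ (ℓ - m) * (ℓ.choose m : Matrix (Fin 2) (Fin 2) ℤ_[ℓ]) = κ ^ (n + 2) • C := by
      rw [hC, Finset.smul_sum]
      refine Finset.sum_congr rfl fun m hm => ?_
      rw [one_pow, mul_one, smul_pow, smul_mul_assoc, mul_natCast_eq_smul, smul_smul,
        ← pow_mul, smul_smul]
      congr 1
      have := hq m hm
      have hcast : κ ^ (n * m) * (ℓ.choose m : ℤ_[ℓ]) = ((ℓ ^ (n * m) * ℓ.choose m : ℕ) : ℤ_[ℓ]) := by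
        push_cast [hκ]; ring
      rw [hcast, ← this]
      push_cast [hκ]
      ring
    rw [h0, h1, hrest]
    rw [smul_add]
    congr 1
    rw [smul_smul, ← pow_succ]
  refine ⟨g ^ ℓ, pow_mem hg ℓ, A + κ • C, ?_, ?_⟩
  · rw [Units.val_pow_eq_pow_val, key, hκ]
  · rw [← hAB]
    ext i j
    simp only [Matrix.map_apply, Matrix.add_apply, Matrix.smul_apply, map_add, _root_.map_mul,
      smul_eq_mul, hκ, map_natCast, ZMod.natCast_self, zero_mul, add_zero]
end

section
/- Let ℓ be a prime and G a closed subgroup of GL₂(ℤ_ℓ) with filtration subspaces 𝔤_n as above. If n ≥ 1 (n ≥ 2 for ℓ = 2) and 𝔤_n = M₂(F_ℓ), then G contains the full congruence subgroup I + ℓⁿM₂(ℤ_ℓ). -/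
open Matrix

section Aux

open Filter

variable {ℓ : ℕ} [Fact (Nat.Prime ℓ)]

abbrev M2 (ℓ : ℕ) [Fact (Nat.Prime ℓ)] := Matrix (Fin 2) (Fin 2) ℤ_[ℓ]

lemma dvd_of_toZMod_eq_zero {x : ℤ_[ℓ]} (h : PadicInt.toZMod x = 0) : (ℓ : ℤ_[ℓ]) ∣ x := by
  have hx : x ∈ RingHom.ker (PadicInt.toZMod : ℤ_[ℓ] →+* ZMod ℓ) := h
  rwa [PadicInt.ker_toZMod, PadicInt.maximalIdeal_eq_span_p, Ideal.mem_span_singleton] at hx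

lemma key (G : Subgroup (GL (Fin 2) ℤ_[ℓ])) (n : ℕ) (hn : 1 ≤ n) (h2 : ℓ = 2 → 2 ≤ n)
    (hfull : filt ℓ G n = Set.univ) :
    ∀ m, n ≤ m → ∀ C : M2 ℓ, ∃ g ∈ G,
      ∀ i j, ((ℓ : ℤ_[ℓ]) ^ (m + 1)) ∣
        ((g : M2 ℓ) - (1 + ((ℓ : ℤ_[ℓ]) ^ m) • C)) i j := by
  intro m hm
  induction m, hm using Nat.le_induction with
  | base =>
    intro C
    obtain ⟨g, hg, A, hA1, hA2⟩ := (Set.eq_univ_iff_forall.mp hfull)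
      (C.map (⇑(PadicInt.toZMod : ℤ_[ℓ] →+* ZMod ℓ)))
    refine ⟨g, hg, fun i j => ?_⟩
    have he : ((g : M2 ℓ) - (1 + ((ℓ : ℤ_[ℓ]) ^ n) • C)) i j
        = (ℓ : ℤ_[ℓ]) ^ n * (A i j - C i j) := by
      rw [hA1]
      simp [Matrix.sub_apply, Matrix.add_apply, Matrix.smul_apply, mul_sub]
    rw [he, pow_succ, mul_comm ((ℓ : ℤ_[ℓ]) ^ n) (ℓ : ℤ_[ℓ]), mul_comm ((ℓ : ℤ_[ℓ]) ^ n)]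
    refine mul_dvd_mul (dvd_of_toZMod_eq_zero ?_) dvd_rfl
    have := congrFun (congrFun (congrArg Matrix.of (congrArg (fun X => X) hA2)) i) j
    have h1 : PadicInt.toZMod (A i j) = PadicInt.toZMod (C i j) := by
      have := congrFun (congrFun hA2 i) j
      simpa [Matrix.map_apply] using this
    rw [map_sub, h1, sub_self]
  | succ m hm ih =>
    intro C
    obtain ⟨g, hg, hdvd⟩ := ih C
    choose E hE using hdvd
    set B : M2 ℓ := C + (ℓ : ℤ_[ℓ]) • Matrix.of E with hB
    have hgval : (g : M2 ℓ) = 1 + ((ℓ : ℤ_[ℓ]) ^ m) • B := by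
      ext i j
      have := hE i j
      simp only [Matrix.sub_apply, Matrix.add_apply, Matrix.smul_apply, smul_eq_mul] at this ⊢
      rw [hB]
      simp only [Matrix.add_apply, Matrix.smul_apply, Matrix.of_apply, smul_eq_mul]
      rw [pow_succ] at this
      linear_combination this
    refine ⟨g ^ ℓ, pow_mem hg ℓ, fun i j => ?_⟩
    have hℓ2 : 2 ≤ ℓ := (Fact.out : Nat.Prime ℓ).two_le
    set x : M2 ℓ := ((ℓ : ℤ_[ℓ]) ^ m) • B with hx
    have hpow : ((g ^ ℓ : GL (Fin 2) ℤ_[ℓ]) : M2 ℓ) = (x + 1) ^ ℓ := by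
      rw [Units.val_pow_eq_pow_val, hgval, add_comm]
    have hbinom : (x + 1) ^ ℓ = ∑ k ∈ Finset.range (ℓ + 1), (Nat.choose ℓ k) • x ^ k := by
      rw [(Commute.one_right x).add_pow]
      refine Finset.sum_congr rfl fun k _ => ?_
      rw [one_pow, mul_one, nsmul_eq_mul, (Nat.cast_commute (Nat.choose ℓ k) (x ^ k)).eq]
    have hsplit : ∑ k ∈ Finset.range (ℓ + 1), (Nat.choose ℓ k) • x ^ k
        = 1 + ℓ • x + ∑ k ∈ Finset.Ico 2 (ℓ + 1), (Nat.choose ℓ k) • x ^ k := by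
      rw [Finset.range_eq_Ico,
        ← Finset.sum_Ico_consecutive _ (by omega : 0 ≤ 2) (by omega : 2 ≤ ℓ + 1)]
      congr 1
      rw [← Finset.range_eq_Ico, Finset.sum_range_succ, Finset.sum_range_one]
      simp [Nat.choose_one_right]
    have hℓx : ℓ • x = ((ℓ : ℤ_[ℓ]) ^ (m + 1)) • C + ((ℓ : ℤ_[ℓ]) ^ (m + 2)) • Matrix.of E := by
      rw [← Nat.cast_smul_eq_nsmul ℤ_[ℓ], hx, hB]
      module
    have hmain : ((g ^ ℓ : GL (Fin 2) ℤ_[ℓ]) : M2 ℓ) - (1 + ((ℓ : ℤ_[ℓ]) ^ (m + 1)) • C)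
        = ((ℓ : ℤ_[ℓ]) ^ (m + 2)) • Matrix.of E
          + ∑ k ∈ Finset.Ico 2 (ℓ + 1), (Nat.choose ℓ k) • x ^ k := by
      rw [hpow, hbinom, hsplit, hℓx]
      abel
    rw [hmain]
    simp only [Matrix.add_apply, Matrix.smul_apply, Matrix.sum_apply, smul_eq_mul]
    refine dvd_add (Dvd.dvd.mul_right dvd_rfl _) (Finset.dvd_sum fun k hk => ?_)
    rw [Finset.mem_Ico] at hk
    have hxk : (x ^ k) i j = (ℓ : ℤ_[ℓ]) ^ (m * k) * (B ^ k) i j := by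
      rw [hx, smul_pow, ← pow_mul, Matrix.smul_apply, smul_eq_mul]
    rw [nsmul_eq_mul, hxk]
    have hprime : Nat.Prime ℓ := Fact.out
    rcases eq_or_lt_of_le (by omega : k ≤ ℓ) with hkℓ | hkℓ
    · have hle : m + 2 ≤ m * k := by
        rcases Nat.lt_or_ge ℓ 3 with h3 | h3
        · have hℓ : ℓ = 2 := by omega
          have hn2 : 2 ≤ n := h2 hℓ
          have hk2 : k = 2 := by omega
          subst hk2
          omega
        · have h1 : m * 3 ≤ m * k := Nat.mul_le_mul le_rfl (by omega)
          have h0 : m + 2 ≤ m * 3 := by omega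
          exact le_trans h0 h1
      exact Dvd.dvd.mul_left ((pow_dvd_pow _ hle).mul_right _) _
    · have hc : ℓ ∣ Nat.choose ℓ k := hprime.dvd_choose_self (by omega) hkℓ
      have hle : m + 2 ≤ 1 + m * k := by
        have : m * 2 ≤ m * k := Nat.mul_le_mul le_rfl hk.1
        omega
      refine dvd_trans (pow_dvd_pow _ hle) ?_
      rw [pow_add, pow_one]
      exact mul_dvd_mul (by exact_mod_cast Nat.cast_dvd_cast (α := ℤ_[ℓ]) hc)
        (dvd_mul_right _ _)

lemma dvd_mul_entries_left {d : ℤ_[ℓ]} {D : M2 ℓ} (h : ∀ i j, d ∣ D i j) (X : M2 ℓ) :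
    ∀ i j, d ∣ (X * D) i j := by
  intro i j
  rw [Matrix.mul_apply]
  exact Finset.dvd_sum fun k _ => Dvd.dvd.mul_left (h k j) _

lemma dvd_mul_entries_right {d : ℤ_[ℓ]} {D : M2 ℓ} (h : ∀ i j, d ∣ D i j) (Y : M2 ℓ) :
    ∀ i j, d ∣ (D * Y) i j := by
  intro i j
  rw [Matrix.mul_apply]
  exact Finset.dvd_sum fun k _ => Dvd.dvd.mul_right (h i k) _

lemma approx (G : Subgroup (GL (Fin 2) ℤ_[ℓ])) (n : ℕ) (hn : 1 ≤ n) (h2 : ℓ = 2 → 2 ≤ n)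
    (hfull : filt ℓ G n = Set.univ) (A : GL (Fin 2) ℤ_[ℓ])
    (hA : ∀ i j, ((ℓ : ℤ_[ℓ]) ^ n) ∣ (((A : M2 ℓ)) - 1) i j) :
    ∀ k, ∃ g : GL (Fin 2) ℤ_[ℓ], g ∈ G ∧
      ∀ i j, ((ℓ : ℤ_[ℓ]) ^ (n + k)) ∣ ((A : M2 ℓ) - (g : M2 ℓ)) i j := by
  intro k
  induction k with
  | zero =>
    refine ⟨1, one_mem G, fun i j => ?_⟩
    simpa using hA i j
  | succ k ih =>
    obtain ⟨g, hg, hdvd⟩ := ih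
    have hX : ∀ i j, ((ℓ : ℤ_[ℓ]) ^ (n + k)) ∣
        (((A * g⁻¹ : GL (Fin 2) ℤ_[ℓ]) : M2 ℓ) - 1) i j := by
      have heq : ((A * g⁻¹ : GL (Fin 2) ℤ_[ℓ]) : M2 ℓ) - 1
          = ((A : M2 ℓ) - (g : M2 ℓ)) * ((g⁻¹ : GL (Fin 2) ℤ_[ℓ]) : M2 ℓ) := by
        rw [Units.val_mul, sub_mul, Units.mul_inv]
      rw [heq]
      exact dvd_mul_entries_right hdvd _
    choose Cf hC using hX
    obtain ⟨h', hh', hdvd'⟩ := key G n hn h2 hfull (n + k) (by omega) (Matrix.of Cf)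
    have hXval : ((A * g⁻¹ : GL (Fin 2) ℤ_[ℓ]) : M2 ℓ)
        = 1 + ((ℓ : ℤ_[ℓ]) ^ (n + k)) • Matrix.of Cf := by
      ext i j
      have := hC i j
      simp only [Matrix.sub_apply, Matrix.one_apply, Matrix.add_apply, Matrix.smul_apply,
        Matrix.of_apply, smul_eq_mul] at this ⊢
      linear_combination this
    refine ⟨h' * g, mul_mem hh' hg, fun i j => ?_⟩
    have heq2 : (A : M2 ℓ) - ((h' * g : GL (Fin 2) ℤ_[ℓ]) : M2 ℓ)
        = (((A * g⁻¹ : GL (Fin 2) ℤ_[ℓ]) : M2 ℓ) - (h' : M2 ℓ)) * (g : M2 ℓ) := by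
      rw [Units.val_mul, Units.val_mul, sub_mul, mul_assoc, Units.inv_mul, mul_one]
    rw [heq2]
    refine dvd_mul_entries_right (fun i j => ?_) _ i j
    have := hdvd' i j
    rw [← hXval] at this
    have hneg : (((A * g⁻¹ : GL (Fin 2) ℤ_[ℓ]) : M2 ℓ) - (h' : M2 ℓ)) i j
        = -(((h' : M2 ℓ) - ((A * g⁻¹ : GL (Fin 2) ℤ_[ℓ]) : M2 ℓ)) i j) := by
      simp [Matrix.sub_apply]
    rw [hneg]
    exact (dvd_neg.mpr (by exact_mod_cast this))
lemma tendsto_of_dvd {n : ℕ} {f : ℕ → M2 ℓ} {a : M2 ℓ}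
    (h : ∀ k i j, ((ℓ : ℤ_[ℓ]) ^ (n + k)) ∣ (a - f k) i j) :
    Tendsto f atTop (nhds a) := by
  have hl1 : (ℓ : ℝ)⁻¹ < 1 := by
    rw [inv_lt_one_iff₀]
    right
    exact_mod_cast (Fact.out : Nat.Prime ℓ).one_lt
  have hl0 : (0:ℝ) ≤ (ℓ : ℝ)⁻¹ := by positivity
  have hb : Tendsto (fun k : ℕ => ((ℓ : ℝ)⁻¹) ^ (n + k)) atTop (nhds 0) := by
    simp only [pow_add]
    have := (tendsto_pow_atTop_nhds_zero_of_lt_one hl0 hl1).const_mul (((ℓ:ℝ)⁻¹) ^ n)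
    simpa using this
  refine tendsto_pi_nhds.mpr fun i => tendsto_pi_nhds.mpr fun j => ?_
  rw [tendsto_iff_norm_sub_tendsto_zero]
  refine squeeze_zero (fun _ => norm_nonneg _) (fun k => ?_) hb
  obtain ⟨c, hc⟩ := h k i j
  have : f k i j - a i j = -((ℓ : ℤ_[ℓ]) ^ (n + k) * c) := by
    rw [← hc]; simp [Matrix.sub_apply]
  rw [this, norm_neg]
  calc ‖(ℓ : ℤ_[ℓ]) ^ (n + k) * c‖ ≤ ‖(ℓ : ℤ_[ℓ]) ^ (n + k)‖ * 1 := by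
        rw [norm_mul]
        exact mul_le_mul_of_nonneg_left (PadicInt.norm_le_one c) (norm_nonneg _)
    _ = ((ℓ : ℝ)⁻¹) ^ (n + k) := by
        rw [mul_one, PadicInt.norm_p_pow, ← zpow_natCast ((ℓ:ℝ)⁻¹) (n+k)]
        rw [_root_.inv_zpow, ← _root_.zpow_neg]

end Aux

/-- Let `ℓ` be a prime and `G` a closed subgroup of
`GL₂(ℤ_ℓ)`.  If `n ≥ 1` (`n ≥ 2` for `ℓ = 2`) and `𝔤_n = M₂(F_ℓ)`, then `G`
contains the full congruence subgroup `I + ℓⁿM₂(ℤ_ℓ)`. -/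
theorem stmt5 (ℓ : ℕ) [Fact (Nat.Prime ℓ)] (G : Subgroup (GL (Fin 2) ℤ_[ℓ]))
    (hclosed : IsClosed (G : Set (GL (Fin 2) ℤ_[ℓ])))
    (n : ℕ) (hn : 1 ≤ n) (h2 : ℓ = 2 → 2 ≤ n)
    (hfull : filt ℓ G n = Set.univ) :
    ∀ A : GL (Fin 2) ℤ_[ℓ],
      (∀ i j : Fin 2, ((ℓ : ℤ_[ℓ]) ^ n) ∣
          (((A : Matrix (Fin 2) (Fin 2) ℤ_[ℓ])) - 1) i j) →
      A ∈ G := by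
  intro A hA
  choose g hg hdvd using approx G n hn h2 hfull A hA
  have hval : Filter.Tendsto (fun k => ((g k : GL (Fin 2) ℤ_[ℓ]) : M2 ℓ)) Filter.atTop
      (nhds (A : M2 ℓ)) :=
    tendsto_of_dvd (n := n) fun k i j => hdvd k i j
  have hdvdinv : ∀ k i j, ((ℓ : ℤ_[ℓ]) ^ (n + k)) ∣
      (((A⁻¹ : GL (Fin 2) ℤ_[ℓ]) : M2 ℓ) - (((g k)⁻¹ : GL (Fin 2) ℤ_[ℓ]) : M2 ℓ)) i j := by
    intro k i j
    have heq : ((A⁻¹ : GL (Fin 2) ℤ_[ℓ]) : M2 ℓ) - (((g k)⁻¹ : GL (Fin 2) ℤ_[ℓ]) : M2 ℓ)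
        = (((g k)⁻¹ : GL (Fin 2) ℤ_[ℓ]) : M2 ℓ) * (((g k : GL (Fin 2) ℤ_[ℓ]) : M2 ℓ)
            - (A : M2 ℓ)) * ((A⁻¹ : GL (Fin 2) ℤ_[ℓ]) : M2 ℓ) := by
      have hAAinv : ((A : GL (Fin 2) ℤ_[ℓ]) : M2 ℓ) * ((A⁻¹ : GL (Fin 2) ℤ_[ℓ]) : M2 ℓ) = 1 := A.mul_inv
      have hginv : (((g k)⁻¹ : GL (Fin 2) ℤ_[ℓ]) : M2 ℓ) * ((g k : GL (Fin 2) ℤ_[ℓ]) : M2 ℓ) = 1 := (g k).inv_mul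
      rw [mul_sub, sub_mul, hginv, one_mul, mul_assoc, hAAinv, mul_one]
    rw [heq]
    refine dvd_mul_entries_right (fun i j => dvd_mul_entries_left (fun i j => ?_) _ i j) _ i j
    have := hdvd k i j
    have hneg : (((g k : GL (Fin 2) ℤ_[ℓ]) : M2 ℓ) - (A : M2 ℓ)) i j
        = -(((A : M2 ℓ) - ((g k : GL (Fin 2) ℤ_[ℓ]) : M2 ℓ)) i j) := by
      simp [Matrix.sub_apply]
    rw [hneg]
    exact dvd_neg.mpr this
  have hinv : Filter.Tendsto (fun k => (((g k)⁻¹ : GL (Fin 2) ℤ_[ℓ]) : M2 ℓ)) Filter.atTop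
      (nhds ((A⁻¹ : GL (Fin 2) ℤ_[ℓ]) : M2 ℓ)) :=
    tendsto_of_dvd (n := n) hdvdinv
  have htends : Filter.Tendsto g Filter.atTop (nhds A) := by
    rw [Units.isInducing_embedProduct.tendsto_nhds_iff]
    exact hval.prodMk_nhds ((MulOpposite.continuous_op.tendsto _).comp hinv)
  exact hclosed.mem_of_tendsto htends (Filter.Eventually.of_forall hg)
end

section
/- Let ℓ be a prime and G a closed subgroup of SL₂(ℤ_ℓ) (i.e., det(G)=1) with filtration spaces 𝔤_n ⊆ sl₂(F_ℓ). If n ≥ 1 (n ≥ 2 for ℓ = 2) and 𝔤_n = sl₂(F_ℓ), then G ⊇ {A ∈ SL₂(ℤ_ℓ) : A ≡ I mod ℓⁿ}. -/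
open Matrix

namespace Stmt6Aux

variable (ℓ : ℕ) [Fact (Nat.Prime ℓ)]

local notation "𝕄" => Matrix (Fin 2) (Fin 2) ℤ_[ℓ]

lemma hp : Nat.Prime ℓ := Fact.out

/-- A matrix whose entries all map to zero in `ZMod ℓ` is `ℓ` times a matrix. -/
lemma exists_of_map_zero (A : 𝕄)
    (h : ∀ i j, (PadicInt.toZMod (A i j) : ZMod ℓ) = 0) :
    ∃ C : 𝕄, A = (ℓ : ℤ_[ℓ]) • C := by
  have hd : ∀ i j, (ℓ : ℤ_[ℓ]) ∣ A i j := by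
    intro i j
    have : A i j ∈ RingHom.ker (PadicInt.toZMod : ℤ_[ℓ] →+* ZMod ℓ) := h i j
    rwa [PadicInt.ker_toZMod, PadicInt.maximalIdeal_eq_span_p,
      Ideal.mem_span_singleton] at this
  refine ⟨fun i => fun j => (hd i j).choose, ?_⟩
  ext i j
  exact (hd i j).choose_spec

/-- Divisibility of the binomial coefficients appearing in `(1 + ℓ^m A)^ℓ`. -/
lemma coeff_dvd (m : ℕ) (hm : 1 ≤ m) (h2 : ℓ = 2 → 2 ≤ m) (k : ℕ)
    (hk2 : 2 ≤ k) (hkl : k ≤ ℓ) :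
    ((ℓ : ℤ_[ℓ]) ^ (m + 2)) ∣ ((ℓ : ℤ_[ℓ]) ^ (m * k) * (ℓ.choose k : ℤ_[ℓ])) := by
  have hl2 : 2 ≤ ℓ := (hp ℓ).two_le
  rcases eq_or_lt_of_le hkl with rfl | hlt
  · -- k = ℓ, binomial coefficient is 1
    rw [Nat.choose_self]
    have hle : m + 2 ≤ m * k := by
      rcases eq_or_lt_of_le hl2 with rfl | h3
      · have := h2 rfl; nlinarith
      · nlinarith
    exact Dvd.dvd.mul_right (pow_dvd_pow _ hle) _
  · -- 2 ≤ k < ℓ : `ℓ ∣ choose ℓ k` and `ℓ^(m+1) ∣ ℓ^(m*k)`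
    obtain ⟨c, hc⟩ := (hp ℓ).dvd_choose_self (by omega) hlt
    have hle : m + 1 ≤ m * k := by nlinarith
    have : ((ℓ : ℤ_[ℓ]) ^ (m + 2)) = (ℓ : ℤ_[ℓ]) ^ (m + 1) * (ℓ : ℤ_[ℓ]) := by ring
    rw [this, hc]
    push_cast
    exact mul_dvd_mul (pow_dvd_pow _ hle) (Dvd.intro _ rfl)

/-- The ℓ-th power of `1 + ℓ^m • A` is `1 + ℓ^(m+1) • (A + ℓ • R)`. -/
lemma pow_step (m : ℕ) (hm : 1 ≤ m) (h2 : ℓ = 2 → 2 ≤ m) (A : 𝕄) :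
    ∃ R : 𝕄, (1 + ((ℓ : ℤ_[ℓ]) ^ m) • A) ^ ℓ
      = 1 + ((ℓ : ℤ_[ℓ]) ^ (m + 1)) • (A + (ℓ : ℤ_[ℓ]) • R) := by
  have hl2 : 2 ≤ ℓ := (hp ℓ).two_le
  obtain ⟨s, hs⟩ : ∃ s, ℓ = s + 2 := ⟨ℓ - 2, by omega⟩
  set x : 𝕄 := ((ℓ : ℤ_[ℓ]) ^ m) • A with hx
  have hcomm : Commute x (1 : 𝕄) := Commute.one_right x
  set f : ℕ → 𝕄 := fun k => ((ℓ : ℤ_[ℓ]) ^ (m * k) * (ℓ.choose k : ℤ_[ℓ])) • A ^ k with hf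
  have hexp : (1 + x) ^ ℓ = ∑ k ∈ Finset.range (ℓ + 1), f k := by
    rw [add_comm, hcomm.add_pow]
    refine Finset.sum_congr rfl fun k _ => ?_
    rw [one_pow, mul_one, hx, smul_pow, ← pow_mul, hf]
    have h1 : (A ^ k) * ((ℓ.choose k : ℕ) : 𝕄) = ((ℓ.choose k : ℕ) : ℤ_[ℓ]) • A ^ k := by
      rw [Nat.cast_smul_eq_nsmul, nsmul_eq_mul]
      exact ((Nat.cast_commute (ℓ.choose k) (A ^ k)).symm).eq
    rw [Matrix.smul_mul, h1, smul_smul]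
  -- peel off the k = 0 and k = 1 terms
  have hsplit : ∑ k ∈ Finset.range (ℓ + 1), f k
      = (∑ k ∈ Finset.range (s + 1), f (k + 2)) + f 1 + f 0 := by
    have h3 : ℓ + 1 = (s + 2) + 1 := by omega
    rw [h3, Finset.sum_range_succ' f (s + 2), Finset.sum_range_succ' (fun k => f (k + 1)) (s + 1)]
  have hf0 : f 0 = 1 := by simp [hf]
  have hf1 : f 1 = ((ℓ : ℤ_[ℓ]) ^ (m + 1)) • A := by
    simp [hf, pow_succ, mul_comm]
  -- the tail is divisible by ℓ^(m+2)
  have hdvd : ∀ k : ℕ, ∃ c : ℤ_[ℓ], k ≤ s →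
      ((ℓ : ℤ_[ℓ]) ^ (m * (k + 2)) * (ℓ.choose (k + 2) : ℤ_[ℓ]))
        = (ℓ : ℤ_[ℓ]) ^ (m + 2) * c := by
    intro k
    by_cases hk : k ≤ s
    · obtain ⟨c, hc⟩ := coeff_dvd ℓ m hm h2 (k + 2) (by omega) (by omega)
      exact ⟨c, fun _ => hc⟩
    · exact ⟨0, fun h => absurd h hk⟩
  choose c hc using hdvd
  have hR : ∑ k ∈ Finset.range (s + 1), f (k + 2)
      = ((ℓ : ℤ_[ℓ]) ^ (m + 2)) • (∑ k ∈ Finset.range (s + 1), c k • A ^ (k + 2)) := by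
    rw [Finset.smul_sum]
    refine Finset.sum_congr rfl fun k hk => ?_
    have hks : k ≤ s := by simp only [Finset.mem_range] at hk; omega
    rw [hf]
    simp only
    rw [hc k hks, ← smul_smul]
  refine ⟨∑ k ∈ Finset.range (s + 1), c k • A ^ (k + 2), ?_⟩
  rw [hexp, hsplit, hf0, hf1, hR, smul_add, smul_smul, ← pow_succ]
  abel

variable {ℓ}

/-- The filtration stays full at every level `m ≥ n`. -/
lemma filt_full (G : Subgroup (GL (Fin 2) ℤ_[ℓ])) (n : ℕ) (hn : 1 ≤ n) (h2 : ℓ = 2 → 2 ≤ n)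
    (hfull : filt ℓ G n = {B : Matrix (Fin 2) (Fin 2) (ZMod ℓ) | Matrix.trace B = 0}) :
    ∀ m, n ≤ m → ∀ B : Matrix (Fin 2) (Fin 2) (ZMod ℓ), Matrix.trace B = 0 →
      ∃ g ∈ G, ∃ A : 𝕄, (g : 𝕄) = 1 + ((ℓ : ℤ_[ℓ]) ^ m) • A ∧
        A.map (⇑(PadicInt.toZMod : ℤ_[ℓ] →+* ZMod ℓ)) = B := by
  intro m hm
  induction m, hm using Nat.le_induction with
  | base =>
    intro B hB
    have : B ∈ filt ℓ G n := by rw [hfull]; exact hB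
    exact this
  | succ m hm ih =>
    intro B hB
    obtain ⟨g, hg, A, hgA, hmap⟩ := ih B hB
    obtain ⟨R, hRe⟩ := pow_step ℓ m (le_trans hn hm) (fun h => le_trans (h2 h) hm) A
    refine ⟨g ^ ℓ, pow_mem hg ℓ, A + (ℓ : ℤ_[ℓ]) • R, ?_, ?_⟩
    · rw [Units.val_pow_eq_pow_val, hgA, hRe]
    · ext i j
      have hAij : PadicInt.toZMod (A i j) = B i j := by rw [← hmap]; rfl
      simp [Matrix.map_apply, Matrix.add_apply, Matrix.smul_apply, map_add, _root_.map_mul,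
        hAij, map_natCast, ZMod.natCast_self]

/-- Approximation step: any `A ≡ 1 mod ℓ^m` with `det A = 1` can be improved to
`≡ 1 mod ℓ^(m+1)` by multiplying by an element of `G`. -/
lemma approx (G : Subgroup (GL (Fin 2) ℤ_[ℓ])) (n : ℕ) (hn : 1 ≤ n) (h2 : ℓ = 2 → 2 ≤ n)
    (hfull : filt ℓ G n = {B : Matrix (Fin 2) (Fin 2) (ZMod ℓ) | Matrix.trace B = 0})
    (m : ℕ) (hm : n ≤ m) (A : GL (Fin 2) ℤ_[ℓ])
    (hdet : Matrix.det (A : 𝕄) = 1) (C : 𝕄)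
    (hAC : (A : 𝕄) = 1 + ((ℓ : ℤ_[ℓ]) ^ m) • C) :
    ∃ g ∈ G, ∃ C' : 𝕄,
      ((g⁻¹ * A : GL (Fin 2) ℤ_[ℓ]) : 𝕄) = 1 + ((ℓ : ℤ_[ℓ]) ^ (m + 1)) • C' := by
  set x : ℤ_[ℓ] := (ℓ : ℤ_[ℓ]) ^ m with hxdef
  have hx0 : x ≠ 0 := pow_ne_zero _ (Nat.cast_ne_zero.mpr (hp ℓ).ne_zero)
  rw [hAC] at hdet
  rw [Matrix.det_fin_two] at hdet
  simp [Matrix.add_apply, Matrix.smul_apply, Matrix.one_apply] at hdet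
  have key : x * (C 0 0 + C 1 1 + x * (C 0 0 * C 1 1 - C 0 1 * C 1 0)) = 0 := by
    linear_combination hdet
  have htr : C 0 0 + C 1 1 = -(x * (C 0 0 * C 1 1 - C 0 1 * C 1 0)) := by
    rcases mul_eq_zero.mp key with h | h
    · exact absurd h hx0
    · linear_combination h
  have hxmap : PadicInt.toZMod x = 0 := by
    rw [hxdef, map_pow, map_natCast, ZMod.natCast_self, zero_pow (by omega : m ≠ 0)]
  set B : Matrix (Fin 2) (Fin 2) (ZMod ℓ) :=
    C.map (⇑(PadicInt.toZMod : ℤ_[ℓ] →+* ZMod ℓ)) with hBdef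
  have htrB : Matrix.trace B = 0 := by
    rw [Matrix.trace_fin_two]
    have : B 0 0 + B 1 1 = PadicInt.toZMod (C 0 0 + C 1 1) := by
      rw [map_add]; rfl
    rw [this, htr, map_neg, _root_.map_mul, hxmap, zero_mul, neg_zero]
  obtain ⟨g, hg, D, hgD, hDmap⟩ := filt_full G n hn h2 hfull m hm B htrB
  have hCD : ∀ i j, PadicInt.toZMod ((C - D) i j) = 0 := by
    intro i j
    have h1 : PadicInt.toZMod (C i j) = B i j := rfl
    have h2' : PadicInt.toZMod (D i j) = B i j := by rw [← hDmap]; rfl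
    rw [Matrix.sub_apply, map_sub, h1, h2', sub_self]
  obtain ⟨E, hE⟩ := exists_of_map_zero ℓ (C - D) hCD
  refine ⟨g, hg, ((g⁻¹ : GL (Fin 2) ℤ_[ℓ]) : 𝕄) * E, ?_⟩
  have h4 : (A : 𝕄) = (g : 𝕄) + ((ℓ : ℤ_[ℓ]) ^ (m + 1)) • E := by
    rw [hAC, hgD, pow_succ]
    have h5 : ((ℓ : ℤ_[ℓ]) ^ m * ℓ) • E = (ℓ : ℤ_[ℓ]) ^ m • (C - D) := by
      rw [mul_smul, ← hE]
    rw [h5, smul_sub]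
    abel
  rw [Units.val_mul, h4, mul_add, Matrix.mul_smul]
  have h5 : ((g⁻¹ : GL (Fin 2) ℤ_[ℓ]) : 𝕄) * (g : 𝕄) = 1 := Units.inv_mul g
  rw [h5]

/-- Iterated approximation. -/
lemma iterate (G : Subgroup (GL (Fin 2) ℤ_[ℓ]))
    (hSL : ∀ g ∈ G, Matrix.det ((g : GL (Fin 2) ℤ_[ℓ]) : 𝕄) = 1)
    (n : ℕ) (hn : 1 ≤ n) (h2 : ℓ = 2 → 2 ≤ n)
    (hfull : filt ℓ G n = {B : Matrix (Fin 2) (Fin 2) (ZMod ℓ) | Matrix.trace B = 0})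
    (A : GL (Fin 2) ℤ_[ℓ]) (hdet : Matrix.det (A : 𝕄) = 1) (C : 𝕄)
    (hAC : (A : 𝕄) = 1 + ((ℓ : ℤ_[ℓ]) ^ n) • C) :
    ∀ k : ℕ, ∃ h ∈ G, ∃ C' : 𝕄,
      ((h⁻¹ * A : GL (Fin 2) ℤ_[ℓ]) : 𝕄) = 1 + ((ℓ : ℤ_[ℓ]) ^ (n + k)) • C' := by
  intro k
  induction k with
  | zero => exact ⟨1, one_mem G, C, by rw [inv_one, one_mul]; exact hAC⟩
  | succ k ih =>
    obtain ⟨h, hh, C', hC'⟩ := ih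
    have hdeth : Matrix.det ((h : GL (Fin 2) ℤ_[ℓ]) : 𝕄) = 1 := hSL h hh
    have hdethinv : Matrix.det ((h⁻¹ : GL (Fin 2) ℤ_[ℓ]) : 𝕄) = 1 := by
      have h5 : ((h⁻¹ : GL (Fin 2) ℤ_[ℓ]) : 𝕄) * (h : 𝕄) = 1 := Units.inv_mul h
      have := congrArg Matrix.det h5
      rwa [Matrix.det_mul, hdeth, mul_one, Matrix.det_one] at this
    have hdet' : Matrix.det ((h⁻¹ * A : GL (Fin 2) ℤ_[ℓ]) : 𝕄) = 1 := by
      rw [Units.val_mul, Matrix.det_mul, hdethinv, hdet, mul_one]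
    obtain ⟨g, hg, C'', hC''⟩ := approx G n hn h2 hfull (n + k) (Nat.le_add_right n k)
      (h⁻¹ * A) hdet' C' hC'
    refine ⟨h * g, mul_mem hh hg, C'', ?_⟩
    have heq : (h * g)⁻¹ * A = g⁻¹ * (h⁻¹ * A) := by
      rw [_root_.mul_inv_rev, mul_assoc]
    rw [heq]
    exact hC''

/-- Convergence from entrywise `ℓ`-adic estimates. -/
lemma tendsto_of_approx (n : ℕ) (hn : 1 ≤ n) (X : ℕ → 𝕄) (L : 𝕄) (W : ℕ → 𝕄)
    (hX : ∀ k, L - X k = ((ℓ : ℤ_[ℓ]) ^ (n + k)) • W k) :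
    Filter.Tendsto X Filter.atTop (nhds L) := by
  have hlt : ‖(ℓ : ℤ_[ℓ])‖ < 1 := by
    rw [PadicInt.norm_p]
    exact inv_lt_one_of_one_lt₀ (by exact_mod_cast (hp ℓ).one_lt)
  have hb : Filter.Tendsto (fun k => ‖(ℓ : ℤ_[ℓ])‖ ^ (n + k)) Filter.atTop (nhds 0) := by
    have h1 := (tendsto_pow_atTop_nhds_zero_of_lt_one (norm_nonneg _) hlt).comp
      (Filter.tendsto_add_atTop_nat n)
    have : (fun k => ‖(ℓ : ℤ_[ℓ])‖ ^ (n + k))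
        = (fun j => ‖(ℓ : ℤ_[ℓ])‖ ^ j) ∘ (fun k => k + n) := by
      funext k; simp [Function.comp, add_comm]
    rw [this]
    exact h1
  refine tendsto_pi_nhds.mpr ?_
  intro i
  rw [tendsto_pi_nhds]
  intro j
  rw [tendsto_iff_norm_sub_tendsto_zero]
  refine squeeze_zero (fun k => norm_nonneg _) (fun k => ?_) hb
  have hk : X k i j - L i j = -(((ℓ : ℤ_[ℓ]) ^ (n + k)) * W k i j) := by
    have := congrFun (congrFun (hX k) i) j
    simp only [Matrix.sub_apply, Matrix.smul_apply, smul_eq_mul] at this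
    linear_combination -this
  rw [hk, norm_neg]
  calc ‖(ℓ : ℤ_[ℓ]) ^ (n + k) * W k i j‖
      ≤ ‖(ℓ : ℤ_[ℓ]) ^ (n + k)‖ * ‖W k i j‖ := norm_mul_le _ _
    _ ≤ ‖(ℓ : ℤ_[ℓ]) ^ (n + k)‖ * 1 := by
        exact mul_le_mul_of_nonneg_left (PadicInt.norm_le_one _) (norm_nonneg _)
    _ ≤ ‖(ℓ : ℤ_[ℓ])‖ ^ (n + k) := by
        rw [mul_one]; exact norm_pow_le' _ (by omega : 0 < n + k)

end Stmt6Aux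

/-- Let `ℓ` be a prime and `G` a closed subgroup of
`SL₂(ℤ_ℓ)` (i.e. a closed subgroup of `GL₂(ℤ_ℓ)` with `det(G) = 1`).  If
`n ≥ 1` (`n ≥ 2` for `ℓ = 2`) and `𝔤_n = sl₂(F_ℓ)`, then
`G ⊇ {A ∈ SL₂(ℤ_ℓ) : A ≡ I mod ℓⁿ}`. -/
theorem stmt6 (ℓ : ℕ) [Fact (Nat.Prime ℓ)] (G : Subgroup (GL (Fin 2) ℤ_[ℓ]))
    (hclosed : IsClosed (G : Set (GL (Fin 2) ℤ_[ℓ])))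
    (hSL : ∀ g ∈ G, Matrix.det ((g : GL (Fin 2) ℤ_[ℓ]) : Matrix (Fin 2) (Fin 2) ℤ_[ℓ]) = 1)
    (n : ℕ) (hn : 1 ≤ n) (h2 : ℓ = 2 → 2 ≤ n)
    (hfull : filt ℓ G n = {B : Matrix (Fin 2) (Fin 2) (ZMod ℓ) | Matrix.trace B = 0}) :
    ∀ A : GL (Fin 2) ℤ_[ℓ],
      Matrix.det ((A : Matrix (Fin 2) (Fin 2) ℤ_[ℓ])) = 1 →
      (∀ i j : Fin 2, ((ℓ : ℤ_[ℓ]) ^ n) ∣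
          (((A : Matrix (Fin 2) (Fin 2) ℤ_[ℓ])) - 1) i j) →
      A ∈ G := by
  intro A hdet hdvd
  -- extract the matrix `C` with `A = 1 + ℓ^n • C`
  obtain ⟨C, hAC⟩ : ∃ C : Matrix (Fin 2) (Fin 2) ℤ_[ℓ],
      (A : Matrix (Fin 2) (Fin 2) ℤ_[ℓ]) = 1 + ((ℓ : ℤ_[ℓ]) ^ n) • C := by
    refine ⟨Matrix.of (fun i j => (hdvd i j).choose), ?_⟩
    ext i j
    have hspec : A i j - (if i = j then 1 else 0) = (ℓ : ℤ_[ℓ]) ^ n * (hdvd i j).choose :=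
      (hdvd i j).choose_spec
    simp only [Matrix.add_apply, Matrix.smul_apply, Matrix.one_apply, Matrix.of_apply,
      smul_eq_mul]
    linear_combination hspec
  have hiter := Stmt6Aux.iterate G hSL n hn h2 hfull A hdet C hAC
  choose h hmem C' hC' using hiter
  -- `h k` tends to `A` both in value and inverse
  have hval : ∀ k, ((A : Matrix (Fin 2) (Fin 2) ℤ_[ℓ]))
      = ((h k : GL (Fin 2) ℤ_[ℓ]) : Matrix (Fin 2) (Fin 2) ℤ_[ℓ])
        + ((ℓ : ℤ_[ℓ]) ^ (n + k)) • (((h k : GL (Fin 2) ℤ_[ℓ]) : Matrix (Fin 2) (Fin 2) ℤ_[ℓ]) * C' k) := by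
    intro k
    have h1 : ((h k : GL (Fin 2) ℤ_[ℓ]) : Matrix (Fin 2) (Fin 2) ℤ_[ℓ])
        * (((h k)⁻¹ * A : GL (Fin 2) ℤ_[ℓ]) : Matrix (Fin 2) (Fin 2) ℤ_[ℓ])
        = (A : Matrix (Fin 2) (Fin 2) ℤ_[ℓ]) := by
      rw [← Units.val_mul, ← mul_assoc, mul_inv_cancel, one_mul]
    rw [← h1, hC' k, mul_add, mul_one, Matrix.mul_smul]
  have htend1 : Filter.Tendsto (fun k => ((h k : GL (Fin 2) ℤ_[ℓ]) : Matrix (Fin 2) (Fin 2) ℤ_[ℓ]))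
      Filter.atTop (nhds ((A : GL (Fin 2) ℤ_[ℓ]) : Matrix (Fin 2) (Fin 2) ℤ_[ℓ])) := by
    refine Stmt6Aux.tendsto_of_approx n hn _ _
      (fun k => ((h k : GL (Fin 2) ℤ_[ℓ]) : Matrix (Fin 2) (Fin 2) ℤ_[ℓ]) * C' k) (fun k => ?_)
    rw [hval k]; abel
  have htend2 : Filter.Tendsto
      (fun k => (((h k)⁻¹ : GL (Fin 2) ℤ_[ℓ]) : Matrix (Fin 2) (Fin 2) ℤ_[ℓ]))
      Filter.atTop (nhds ((A⁻¹ : GL (Fin 2) ℤ_[ℓ]) : Matrix (Fin 2) (Fin 2) ℤ_[ℓ])) := by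
    refine Stmt6Aux.tendsto_of_approx n hn _ _
      (fun k => -((((h k)⁻¹ : GL (Fin 2) ℤ_[ℓ]) : Matrix (Fin 2) (Fin 2) ℤ_[ℓ])
        * (((h k : GL (Fin 2) ℤ_[ℓ]) : Matrix (Fin 2) (Fin 2) ℤ_[ℓ]) * C' k)
        * ((A⁻¹ : GL (Fin 2) ℤ_[ℓ]) : Matrix (Fin 2) (Fin 2) ℤ_[ℓ]))) (fun k => ?_)
    have hid : ((A⁻¹ : GL (Fin 2) ℤ_[ℓ]) : Matrix (Fin 2) (Fin 2) ℤ_[ℓ])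
        - (((h k)⁻¹ : GL (Fin 2) ℤ_[ℓ]) : Matrix (Fin 2) (Fin 2) ℤ_[ℓ])
        = (((h k)⁻¹ : GL (Fin 2) ℤ_[ℓ]) : Matrix (Fin 2) (Fin 2) ℤ_[ℓ])
          * (((h k : GL (Fin 2) ℤ_[ℓ]) : Matrix (Fin 2) (Fin 2) ℤ_[ℓ])
            - ((A : GL (Fin 2) ℤ_[ℓ]) : Matrix (Fin 2) (Fin 2) ℤ_[ℓ]))
          * ((A⁻¹ : GL (Fin 2) ℤ_[ℓ]) : Matrix (Fin 2) (Fin 2) ℤ_[ℓ]) := by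
      have e1 : (((h k)⁻¹ : GL (Fin 2) ℤ_[ℓ]) : Matrix (Fin 2) (Fin 2) ℤ_[ℓ])
          * ((h k : GL (Fin 2) ℤ_[ℓ]) : Matrix (Fin 2) (Fin 2) ℤ_[ℓ]) = 1 := Units.inv_mul _
      have e2 : ((A : GL (Fin 2) ℤ_[ℓ]) : Matrix (Fin 2) (Fin 2) ℤ_[ℓ])
          * ((A⁻¹ : GL (Fin 2) ℤ_[ℓ]) : Matrix (Fin 2) (Fin 2) ℤ_[ℓ]) = 1 := Units.mul_inv _
      rw [mul_sub, sub_mul, e1, one_mul, mul_assoc, e2, mul_one]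
    rw [hid]
    have hsub : ((h k : GL (Fin 2) ℤ_[ℓ]) : Matrix (Fin 2) (Fin 2) ℤ_[ℓ])
        - ((A : GL (Fin 2) ℤ_[ℓ]) : Matrix (Fin 2) (Fin 2) ℤ_[ℓ])
        = -(((ℓ : ℤ_[ℓ]) ^ (n + k)) • (((h k : GL (Fin 2) ℤ_[ℓ]) : Matrix (Fin 2) (Fin 2) ℤ_[ℓ]) * C' k)) := by
      rw [hval k]; abel
    rw [hsub]
    simp only [Matrix.mul_neg, Matrix.neg_mul, Matrix.mul_smul, Matrix.smul_mul, smul_neg,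
      mul_assoc]
  -- conclude by closedness
  have htend : Filter.Tendsto h Filter.atTop (nhds A) := by
    rw [(Units.isInducing_embedProduct (M := Matrix (Fin 2) (Fin 2) ℤ_[ℓ])).tendsto_nhds_iff]
    exact (htend1.prodMk_nhds (MulOpposite.continuous_op.continuousAt.tendsto.comp htend2))
  exact hclosed.mem_of_tendsto htend (Filter.Eventually.of_forall hmem)
end

section
/- Let ℓ be a prime and G a closed subgroup of GL₂(ℤ_ℓ) with filtration spaces 𝔤_n ⊆ M₂(F_ℓ). If n ≥ 1 (n ≥ 2 for ℓ = 2) and 𝔤_n = 𝔤_{2n}, then 𝔤_n is closed under the Lie bracket [A,B] = AB − BA, i.e., 𝔤_n is a Lie subalgebra of gl₂(F_ℓ). -/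
open Matrix

private lemma comm_aux (R : Type*) [CommRing R] (c : R) (M₁ M₂ K₁ K₂ D : Matrix (Fin 2) (Fin 2) R)
    (hk : M₁ * M₂ = M₂ * M₁ + c • D) (h1 : M₁ * K₁ = 1) (h2 : M₂ * K₂ = 1) :
    M₁ * M₂ * K₁ * K₂ = 1 + c • (D * K₁ * K₂) := by
  rw [hk, add_mul, add_mul, smul_mul_assoc, smul_mul_assoc, mul_assoc M₂, h1, mul_one, h2]

private lemma key_aux (R : Type*) [CommRing R] (c : R) (A₁ A₂ M₁ M₂ : Matrix (Fin 2) (Fin 2) R)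
    (h₁ : M₁ = 1 + c • A₁) (h₂ : M₂ = 1 + c • A₂) :
    M₁ * M₂ = M₂ * M₁ + (c * c) • (A₁ * A₂ - A₂ * A₁) := by
  rw [h₁, h₂]
  simp [mul_add, add_mul, smul_smul, mul_smul_comm, smul_mul_assoc, smul_sub]
  abel

/-- Let `ℓ` be a prime and `G` a closed subgroup of
`GL₂(ℤ_ℓ)`.  If `n ≥ 1` (`n ≥ 2` for `ℓ = 2`) and `𝔤_n = 𝔤_{2n}`, then `𝔤_n`
is closed under the Lie bracket `[A,B] = AB − BA`, i.e. `𝔤_n` is a Lie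
subalgebra of `gl₂(F_ℓ)`. -/
theorem stmt7 (ℓ : ℕ) [Fact (Nat.Prime ℓ)] (G : Subgroup (GL (Fin 2) ℤ_[ℓ]))
    (hclosed : IsClosed (G : Set (GL (Fin 2) ℤ_[ℓ])))
    (n : ℕ) (hn : 1 ≤ n) (h2 : ℓ = 2 → 2 ≤ n)
    (heq : filt ℓ G n = filt ℓ G (2 * n)) :
    ∀ B₁ ∈ filt ℓ G n, ∀ B₂ ∈ filt ℓ G n, B₁ * B₂ - B₂ * B₁ ∈ filt ℓ G n := by
  intro B₁ hB₁ B₂ hB₂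
  obtain ⟨g₁, hg₁G, A₁, h₁, hm₁⟩ := hB₁
  obtain ⟨g₂, hg₂G, A₂, h₂, hm₂⟩ := hB₂
  rw [heq]
  set φ : ℤ_[ℓ] →+* ZMod ℓ := PadicInt.toZMod with hφ
  have hMK₁ : (g₁ : Matrix (Fin 2) (Fin 2) ℤ_[ℓ]) * ((g₁⁻¹ : GL (Fin 2) ℤ_[ℓ]) : Matrix (Fin 2) (Fin 2) ℤ_[ℓ]) = 1 := Units.mul_inv g₁
  have hMK₂ : (g₂ : Matrix (Fin 2) (Fin 2) ℤ_[ℓ]) * ((g₂⁻¹ : GL (Fin 2) ℤ_[ℓ]) : Matrix (Fin 2) (Fin 2) ℤ_[ℓ]) = 1 := Units.mul_inv g₂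
  have hφℓ : φ ((ℓ : ℤ_[ℓ]) ^ n) = 0 := by
    rw [map_pow, map_natCast, ZMod.natCast_self, zero_pow (by omega)]
  have hmone : (1 : Matrix (Fin 2) (Fin 2) ℤ_[ℓ]).map ⇑φ = 1 :=
    Matrix.map_one ⇑φ (map_zero φ) (map_one φ)
  have hmapg : ∀ M K A : Matrix (Fin 2) (Fin 2) ℤ_[ℓ],
      M = 1 + ((ℓ : ℤ_[ℓ]) ^ n) • A → M * K = 1 → K.map ⇑φ = 1 := by
    intro M K A h hMK
    have hone : M.map ⇑φ = 1 := by
      rw [h]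
      have : ((1 + ((ℓ : ℤ_[ℓ]) ^ n) • A : Matrix (Fin 2) (Fin 2) ℤ_[ℓ])).map ⇑φ
          = (1 : Matrix (Fin 2) (Fin 2) ℤ_[ℓ]).map ⇑φ + φ ((ℓ:ℤ_[ℓ])^n) • A.map ⇑φ := by
        ext i j
        simp [Matrix.map_apply, Matrix.add_apply, Matrix.smul_apply, smul_eq_mul,
          Matrix.one_apply, apply_ite ⇑φ]
      rw [this, hφℓ, hmone]
      simp
    have hMK' : (M * K).map ⇑φ = 1 := by rw [hMK, hmone]
    rwa [Matrix.map_mul, hone, one_mul] at hMK'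
  refine ⟨g₁ * g₂ * g₁⁻¹ * g₂⁻¹,
    mul_mem (mul_mem (mul_mem hg₁G hg₂G) (inv_mem hg₁G)) (inv_mem hg₂G),
    (A₁ * A₂ - A₂ * A₁) * ((g₁⁻¹ : GL (Fin 2) ℤ_[ℓ]) : Matrix (Fin 2) (Fin 2) ℤ_[ℓ])
      * ((g₂⁻¹ : GL (Fin 2) ℤ_[ℓ]) : Matrix (Fin 2) (Fin 2) ℤ_[ℓ]), ?_, ?_⟩
  · have hcoe : ((g₁ * g₂ * g₁⁻¹ * g₂⁻¹ : GL (Fin 2) ℤ_[ℓ]) : Matrix (Fin 2) (Fin 2) ℤ_[ℓ])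
        = (g₁ : Matrix (Fin 2) (Fin 2) ℤ_[ℓ]) * g₂
          * ((g₁⁻¹ : GL (Fin 2) ℤ_[ℓ]) : Matrix (Fin 2) (Fin 2) ℤ_[ℓ])
          * ((g₂⁻¹ : GL (Fin 2) ℤ_[ℓ]) : Matrix (Fin 2) (Fin 2) ℤ_[ℓ]) := by
      simp only [Units.val_mul]
    have key := key_aux ℤ_[ℓ] ((ℓ:ℤ_[ℓ])^n) A₁ A₂ _ _ h₁ h₂
    rw [hcoe, comm_aux ℤ_[ℓ] ((ℓ:ℤ_[ℓ])^n * (ℓ:ℤ_[ℓ])^n) _ _ _ _ _ key hMK₁ hMK₂,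
      ← pow_add, ← two_mul]
  · rw [Matrix.map_mul, Matrix.map_mul, hmapg _ _ A₁ h₁ hMK₁, hmapg _ _ A₂ h₂ hMK₂,
      mul_one, mul_one]
    have : (A₁ * A₂ - A₂ * A₁).map ⇑φ = (A₁.map ⇑φ) * (A₂.map ⇑φ) - (A₂.map ⇑φ) * (A₁.map ⇑φ) := by
      ext i j
      simp [Matrix.map_apply, Matrix.sub_apply, Matrix.mul_apply, map_sum]
    rw [this, hm₁, hm₂]
end

section
/- Let ℓ be an odd prime and G a closed subgroup of GL₂(ℤ_ℓ) with det(G_n) = 1 + ℓⁿℤ_ℓ for all n ≥ 1. Let 𝔤_n be the filtration space of G and 𝔰_n that of S = G ∩ SL₂(ℤ_ℓ). Then tr(𝔤_n) = F_ℓ and 𝔰_n = 𝔤_n ∩ sl₂(F_ℓ) for all n ≥ 1. -/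
open Matrix

/-- The image `𝔰_n ⊆ M₂(F_ℓ)` of `S_n/S_{n+1}` for `S = G ∩ SL₂(ℤ_ℓ)`. -/
def filtS (ℓ : ℕ) [Fact (Nat.Prime ℓ)] (G : Subgroup (GL (Fin 2) ℤ_[ℓ])) (n : ℕ) :
    Set (Matrix (Fin 2) (Fin 2) (ZMod ℓ)) :=
  {B | ∃ g ∈ G, Matrix.det ((g : GL (Fin 2) ℤ_[ℓ]) : Matrix (Fin 2) (Fin 2) ℤ_[ℓ]) = 1 ∧
    ∃ A : Matrix (Fin 2) (Fin 2) ℤ_[ℓ],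
      (g : Matrix (Fin 2) (Fin 2) ℤ_[ℓ]) = 1 + ((ℓ : ℤ_[ℓ]) ^ n) • A ∧
        A.map (⇑(PadicInt.toZMod : ℤ_[ℓ] →+* ZMod ℓ)) = B}

lemma my_det_fin_two {R : Type*} [CommRing R] (c : R) (A : Matrix (Fin 2) (Fin 2) R) :
    Matrix.det (1 + c • A) = 1 + c * Matrix.trace A + c ^ 2 * Matrix.det A := by
  simp [Matrix.det_fin_two, Matrix.trace_fin_two, Matrix.add_apply, Matrix.smul_apply,
    Matrix.one_apply]
  ring

lemma my_toZMod_eq_zero {ℓ : ℕ} [Fact (Nat.Prime ℓ)] (x : ℤ_[ℓ]) :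
    PadicInt.toZMod x = 0 ↔ (ℓ : ℤ_[ℓ]) ∣ x := by
  rw [← RingHom.mem_ker, PadicInt.ker_toZMod, PadicInt.maximalIdeal_eq_span_p,
    Ideal.mem_span_singleton]

lemma my_trace_map {ℓ : ℕ} [Fact (Nat.Prime ℓ)] (A : Matrix (Fin 2) (Fin 2) ℤ_[ℓ]) :
    Matrix.trace (A.map (⇑(PadicInt.toZMod : ℤ_[ℓ] →+* ZMod ℓ)))
      = PadicInt.toZMod (Matrix.trace A) := by
  simp [Matrix.trace_fin_two, Matrix.map_apply]

lemma my_extract {ℓ : ℕ} [Fact (Nat.Prime ℓ)] (m : ℕ) (g : GL (Fin 2) ℤ_[ℓ])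
    (h : ∀ i j : Fin 2, ((ℓ : ℤ_[ℓ]) ^ m) ∣
      (((g : GL (Fin 2) ℤ_[ℓ]) : Matrix (Fin 2) (Fin 2) ℤ_[ℓ]) - 1) i j) :
    ∃ A : Matrix (Fin 2) (Fin 2) ℤ_[ℓ],
      (g : Matrix (Fin 2) (Fin 2) ℤ_[ℓ]) = 1 + ((ℓ : ℤ_[ℓ]) ^ m) • A := by
  choose a ha using h
  refine ⟨Matrix.of a, ?_⟩
  ext i j
  have := ha i j
  simp only [Matrix.sub_apply] at this
  simp [Matrix.add_apply, Matrix.smul_apply, Matrix.of_apply, smul_eq_mul]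
  linear_combination this

/-- Let `ℓ` be an odd prime and `G` a closed subgroup of
`GL₂(ℤ_ℓ)` with `det(G_n) = 1 + ℓⁿℤ_ℓ` for all `n ≥ 1`.  Then
`tr(𝔤_n) = F_ℓ` and `𝔰_n = 𝔤_n ∩ sl₂(F_ℓ)` for all `n ≥ 1`, where `𝔰_n` is
the filtration space of `S = G ∩ SL₂(ℤ_ℓ)`. -/
theorem stmt13 (ℓ : ℕ) [Fact (Nat.Prime ℓ)] (hodd : Odd ℓ)
    (G : Subgroup (GL (Fin 2) ℤ_[ℓ]))
    (hclosed : IsClosed (G : Set (GL (Fin 2) ℤ_[ℓ])))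
    (hdet : ∀ n : ℕ, 1 ≤ n → ∀ u : ℤ_[ℓ],
      (∃ g ∈ G,
        (∀ i j : Fin 2, ((ℓ : ℤ_[ℓ]) ^ n) ∣
            (((g : GL (Fin 2) ℤ_[ℓ]) : Matrix (Fin 2) (Fin 2) ℤ_[ℓ]) - 1) i j) ∧
        Matrix.det ((g : GL (Fin 2) ℤ_[ℓ]) : Matrix (Fin 2) (Fin 2) ℤ_[ℓ]) = u)
      ↔ ∃ a : ℤ_[ℓ], u = 1 + (ℓ : ℤ_[ℓ]) ^ n * a) :
    ∀ n : ℕ, 1 ≤ n →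
      (∀ c : ZMod ℓ, ∃ B ∈ filt ℓ G n, Matrix.trace B = c) ∧
      filtS ℓ G n = {B ∈ filt ℓ G n | Matrix.trace B = 0} := by
  intro n hn
  have hℓ0 : (ℓ : ℤ_[ℓ]) ≠ 0 :=
    Nat.cast_ne_zero.mpr (Nat.Prime.ne_zero (Fact.out : Nat.Prime ℓ))
  have hpow : ((ℓ : ℤ_[ℓ]) ^ n) ≠ 0 := pow_ne_zero _ hℓ0
  have hdvdℓn : (ℓ : ℤ_[ℓ]) ∣ (ℓ : ℤ_[ℓ]) ^ n := dvd_pow_self _ (by omega)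
  constructor
  · -- trace surjectivity
    intro c
    obtain ⟨g, hg, hdvd, hdetg⟩ :=
      (hdet n hn (1 + (ℓ : ℤ_[ℓ]) ^ n * ((c.val : ℕ) : ℤ_[ℓ]))).mpr ⟨_, rfl⟩
    obtain ⟨A, hA⟩ := my_extract n g hdvd
    refine ⟨A.map PadicInt.toZMod, ⟨g, hg, A, hA, rfl⟩, ?_⟩
    rw [hA, my_det_fin_two] at hdetg
    have h2 : Matrix.trace A + (ℓ : ℤ_[ℓ]) ^ n * Matrix.det A = ((c.val : ℕ) : ℤ_[ℓ]) :=
      mul_left_cancel₀ hpow (by linear_combination hdetg)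
    have h3 : Matrix.trace A = ((c.val : ℕ) : ℤ_[ℓ]) - (ℓ : ℤ_[ℓ]) ^ n * Matrix.det A := by
      linear_combination h2
    rw [my_trace_map, h3, map_sub, (my_toZMod_eq_zero _).mpr (hdvdℓn.mul_right _),
      map_natCast, sub_zero]
    exact ZMod.natCast_rightInverse c
  · -- filtS = trace-zero part of filt
    ext B
    constructor
    · rintro ⟨g, hg, hdet1, A, hA, rfl⟩
      refine ⟨⟨g, hg, A, hA, rfl⟩, ?_⟩
      rw [hA, my_det_fin_two] at hdet1
      have h2 : Matrix.trace A + (ℓ : ℤ_[ℓ]) ^ n * Matrix.det A = 0 :=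
        mul_left_cancel₀ hpow (by linear_combination hdet1)
      have h3 : Matrix.trace A = -((ℓ : ℤ_[ℓ]) ^ n * Matrix.det A) := by linear_combination h2
      rw [my_trace_map, h3]
      exact (my_toZMod_eq_zero _).mpr ((hdvdℓn.mul_right _).neg_right)
    · rintro ⟨⟨g, hg, A, hA, rfl⟩, htr⟩
      rw [my_trace_map, my_toZMod_eq_zero] at htr
      obtain ⟨t, ht⟩ := htr
      have hdetg : Matrix.det ((g : GL (Fin 2) ℤ_[ℓ]) : Matrix (Fin 2) (Fin 2) ℤ_[ℓ])
          = 1 + (ℓ : ℤ_[ℓ]) ^ (n + 1) * (t + (ℓ : ℤ_[ℓ]) ^ (n - 1) * Matrix.det A) := by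
        have hsplit : (ℓ : ℤ_[ℓ]) ^ n * (ℓ : ℤ_[ℓ]) ^ n
            = (ℓ : ℤ_[ℓ]) ^ (n + 1) * (ℓ : ℤ_[ℓ]) ^ (n - 1) := by
          rw [← pow_add, ← pow_add]; congr 1; omega
        rw [hA, my_det_fin_two, ht]
        linear_combination (Matrix.det A) * hsplit
      obtain ⟨h, hh, hdvd', hdeth⟩ := (hdet (n + 1) (by omega) _).mpr ⟨_, hdetg⟩
      obtain ⟨C, hC⟩ := my_extract (n + 1) h hdvd'
      set D : Matrix (Fin 2) (Fin 2) ℤ_[ℓ] := ((h⁻¹ : GL (Fin 2) ℤ_[ℓ]) : Matrix (Fin 2) (Fin 2) ℤ_[ℓ]) * C with hD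
      have hinv : ((h⁻¹ : GL (Fin 2) ℤ_[ℓ]) : Matrix (Fin 2) (Fin 2) ℤ_[ℓ])
          * ((h : GL (Fin 2) ℤ_[ℓ]) : Matrix (Fin 2) (Fin 2) ℤ_[ℓ]) = 1 := h.inv_mul
      have hhinv : ((h⁻¹ : GL (Fin 2) ℤ_[ℓ]) : Matrix (Fin 2) (Fin 2) ℤ_[ℓ])
          = 1 - ((ℓ : ℤ_[ℓ]) ^ (n + 1)) • D := by
        rw [eq_sub_iff_add_eq, hD]
        calc ((h⁻¹ : GL (Fin 2) ℤ_[ℓ]) : Matrix (Fin 2) (Fin 2) ℤ_[ℓ])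
              + ((ℓ : ℤ_[ℓ]) ^ (n + 1)) • (((h⁻¹ : GL (Fin 2) ℤ_[ℓ]) : Matrix (Fin 2) (Fin 2) ℤ_[ℓ]) * C)
            = ((h⁻¹ : GL (Fin 2) ℤ_[ℓ]) : Matrix (Fin 2) (Fin 2) ℤ_[ℓ])
              * (1 + ((ℓ : ℤ_[ℓ]) ^ (n + 1)) • C) := by
              rw [mul_add, mul_one, mul_smul_comm]
          _ = 1 := by rw [← hC, hinv]
      set k : GL (Fin 2) ℤ_[ℓ] := g * h⁻¹ with hk
      have hkG : k ∈ G := G.mul_mem hg (G.inv_mem hh)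
      have hkval : ((k : GL (Fin 2) ℤ_[ℓ]) : Matrix (Fin 2) (Fin 2) ℤ_[ℓ])
          = ((g : GL (Fin 2) ℤ_[ℓ]) : Matrix (Fin 2) (Fin 2) ℤ_[ℓ])
            * ((h⁻¹ : GL (Fin 2) ℤ_[ℓ]) : Matrix (Fin 2) (Fin 2) ℤ_[ℓ]) := rfl
      have hdeth_unit : IsUnit (Matrix.det ((h : GL (Fin 2) ℤ_[ℓ]) : Matrix (Fin 2) (Fin 2) ℤ_[ℓ])) := by
        refine IsUnit.of_mul_eq_one (Matrix.det ((h⁻¹ : GL (Fin 2) ℤ_[ℓ]) : Matrix (Fin 2) (Fin 2) ℤ_[ℓ])) ?_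
        rw [← Matrix.det_mul, h.mul_inv, Matrix.det_one]
      have hdetk : Matrix.det ((k : GL (Fin 2) ℤ_[ℓ]) : Matrix (Fin 2) (Fin 2) ℤ_[ℓ]) = 1 := by
        have hdetg_unit : IsUnit (Matrix.det ((g : GL (Fin 2) ℤ_[ℓ]) : Matrix (Fin 2) (Fin 2) ℤ_[ℓ])) :=
          hdeth ▸ hdeth_unit
        have hkh : ((k : GL (Fin 2) ℤ_[ℓ]) : Matrix (Fin 2) (Fin 2) ℤ_[ℓ])
            * ((h : GL (Fin 2) ℤ_[ℓ]) : Matrix (Fin 2) (Fin 2) ℤ_[ℓ])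
            = ((g : GL (Fin 2) ℤ_[ℓ]) : Matrix (Fin 2) (Fin 2) ℤ_[ℓ]) :=
          congrArg Units.val (inv_mul_cancel_right g h)
        have hthis := congrArg Matrix.det hkh
        rw [Matrix.det_mul, hdeth] at hthis
        exact hdetg_unit.mul_right_cancel (by rw [hthis, one_mul])
      set A' : Matrix (Fin 2) (Fin 2) ℤ_[ℓ]
        := A - (ℓ : ℤ_[ℓ]) • (D + ((ℓ : ℤ_[ℓ]) ^ n) • (A * D)) with hA'
      have hkA' : ((k : GL (Fin 2) ℤ_[ℓ]) : Matrix (Fin 2) (Fin 2) ℤ_[ℓ])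
          = 1 + ((ℓ : ℤ_[ℓ]) ^ n) • A' := by
        rw [hkval, hA, hhinv, hA']
        ext i j
        fin_cases i <;> fin_cases j <;>
          simp [Matrix.mul_apply, Fin.sum_univ_two, Matrix.add_apply, Matrix.sub_apply,
            Matrix.smul_apply, Matrix.one_apply, smul_eq_mul] <;> ring
      refine ⟨k, hkG, hdetk, A', hkA', ?_⟩
      rw [hA']
      ext i j
      simp [Matrix.map_apply, Matrix.sub_apply, Matrix.smul_apply, smul_eq_mul, map_sub,
        _root_.map_mul, map_natCast, ZMod.natCast_self]
end

section
/- Let ℓ > 2 be prime, C(ℓ) ⊆ GL₂(F_ℓ) a Cartan subgroup (the unit group of a 2-dimensional commutative étale F_ℓ-subalgebra R of M₂(F_ℓ)), with normalizer C⁺(ℓ). Let G ⊆ C⁺(ℓ) be a subgroup not contained in C(ℓ) whose image in PGL₂(F_ℓ) contains an element of order at least 5. Then under the conjugation action of G, gl₂(F_ℓ) decomposes as V₁ ⊕ V₂ ⊕ V₃ where V₁ = F_ℓ·I, V₂ = {A ∈ R : tr(A) = 0}, and V₃ is a 2-dimensional irreducible F_ℓ[G]-module, and V₁, V₂, V₃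 are pairwise non-isomorphic. -/
open Matrix

set_option maxHeartbeats 1000000

section helpers
open Matrix
variable {F : Type*} [Field F]

private lemma sq_of_trace_zero' (u : Matrix (Fin 2) (Fin 2) F) (h : trace u = 0) :
    u * u = (-(det u)) • 1 := by
  simp [Matrix.trace_fin_two] at h
  ext i j
  fin_cases i <;> fin_cases j <;>
    simp [Matrix.mul_apply, Fin.sum_univ_two, Matrix.det_fin_two,
      Matrix.one_apply, Matrix.smul_apply] <;>
    first
      | linear_combination u 0 0 * h
      | linear_combination u 0 1 * h
      | linear_combination u 1 0 * h
      | linear_combination u 1 1 * h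

private lemma mul_trace_smul_sub' (m : Matrix (Fin 2) (Fin 2) F) :
    m * (trace m • 1 - m) = det m • 1 := by
  ext i j
  fin_cases i <;> fin_cases j <;>
    simp [Matrix.mul_apply, Fin.sum_univ_two, Matrix.trace_fin_two, Matrix.det_fin_two,
      Matrix.one_apply, Matrix.smul_apply, Matrix.sub_apply] <;> ring

private lemma commutant_eq' (hchar : (2:F) ≠ 0) (u : Matrix (Fin 2) (Fin 2) F) (h : trace u = 0)
    (d : F) (huu : u * u = d • 1) (hd : d ≠ 0)
    (A : Matrix (Fin 2) (Fin 2) F) (hA : A * u = u * A) :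
    ∃ x y : F, A = x • 1 + y • u := by
  have htr : u 1 1 = - u 0 0 := by
    simp [Matrix.trace_fin_two] at h; linear_combination h
  have hd' : u 0 0 * u 0 0 + u 0 1 * u 1 0 = d := by
    have := congrFun (congrFun huu 0) 0
    simpa [Matrix.mul_apply, Fin.sum_univ_two, Matrix.one_apply] using this
  have e00 := congrFun (congrFun hA 0) 0
  have e01 := congrFun (congrFun hA 0) 1
  have e10 := congrFun (congrFun hA 1) 0
  simp [Matrix.mul_apply, Fin.sum_univ_two, htr] at e00 e01 e10
  by_cases hq : u 0 1 = 0
  · have hp : u 0 0 ≠ 0 := by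
      intro hp; apply hd; rw [← hd', hp, hq]; ring
    have hA01 : A 0 1 = 0 := by
      have h2 : (2 * u 0 0) * A 0 1 = 0 := by
        linear_combination (A 0 0) * hq - (A 1 1) * hq - e01
      rcases mul_eq_zero.mp h2 with h3 | h3
      · exact absurd h3 (mul_ne_zero hchar hp)
      · exact h3
    refine ⟨(A 0 0 + A 1 1)/2, (A 0 0 - A 1 1)/(2 * u 0 0), ?_⟩
    ext i j
    fin_cases i <;> fin_cases j
    · simp [Matrix.one_apply, Matrix.smul_apply]; field_simp; ring
    · simp [Matrix.one_apply, Matrix.smul_apply, hq, hA01]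
    · simp [Matrix.one_apply, Matrix.smul_apply]; field_simp
      linear_combination e10
    · simp [Matrix.one_apply, Matrix.smul_apply, htr]; field_simp; ring
  · refine ⟨(A 0 0 + A 1 1)/2, A 0 1 / u 0 1, ?_⟩
    ext i j
    fin_cases i <;> fin_cases j
    · simp [Matrix.one_apply, Matrix.smul_apply]; field_simp
      linear_combination e01
    · simp [Matrix.one_apply, Matrix.smul_apply]; field_simp
    · simp [Matrix.one_apply, Matrix.smul_apply]; field_simp
      linear_combination -e00
    · simp [Matrix.one_apply, Matrix.smul_apply, htr]; field_simp
      linear_combination -e01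

private lemma conj_formula' (u A : Matrix (Fin 2) (Fin 2) F) (d x y x' y' : F)
    (huu : u*u = d•1) (hA : u*A + A*u = 0) :
    (x•1 + y•u) * A * (x'•(1 : Matrix (Fin 2) (Fin 2) F) + y'•u)
      = (x*x' - d*y*y')•A + (y*x' - x*y')•(u*A) := by
  have hAu : A*u = -(u*A) := by
    linear_combination (norm := noncomm_ring) hA
  have h2 : u*(u*A) = d•A := by
    rw [← Matrix.mul_assoc, huu, Matrix.smul_mul, Matrix.one_mul]
  simp only [add_mul, mul_add, Matrix.smul_mul, Matrix.mul_smul, Matrix.one_mul,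
    Matrix.mul_one, Matrix.mul_assoc, hAu, mul_neg, neg_mul, Matrix.mul_neg, h2,
    smul_neg, smul_smul]
  module

private lemma scalar_mem_center' {n : ℕ} (g : GL (Fin n) F) (c : F)
    (h : (g : Matrix (Fin n) (Fin n) F) = c • (1 : Matrix (Fin n) (Fin n) F)) :
    g ∈ Subgroup.center (GL (Fin n) F) := by
  rw [Subgroup.mem_center_iff]
  intro b
  apply Units.ext
  rw [Units.val_mul, Units.val_mul]
  rw [h, Matrix.mul_smul, Matrix.smul_mul, Matrix.mul_one, Matrix.one_mul]

private lemma coe_inv_mul' {n : Type*} [DecidableEq n] [Fintype n] (g : GL n F) :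
    ((g⁻¹ : GL n F) : Matrix n n F) * ((g : GL n F) : Matrix n n F) = 1 := by
  rw [← Units.val_mul, inv_mul_cancel, Units.val_one]

private lemma coe_mul_inv' {n : Type*} [DecidableEq n] [Fintype n] (g : GL n F) :
    ((g : GL n F) : Matrix n n F) * ((g⁻¹ : GL n F) : Matrix n n F) = 1 := by
  rw [← Units.val_mul, mul_inv_cancel, Units.val_one]

private lemma order_le_of_pow_central' {G : Type*} [Group G] (g : G) (k : ℕ) (hk : 0 < k)
    (h : g ^ k ∈ Subgroup.center G) :
    orderOf (QuotientGroup.mk (s := Subgroup.center G) g) ≤ k := by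
  apply Nat.le_of_dvd hk
  apply orderOf_dvd_of_pow_eq_one
  rw [← QuotientGroup.mk_pow, QuotientGroup.eq_one_iff]
  exact h

end helpers

/-- A submodule `V` of `M₂(F_ℓ)` is stable under the conjugation action of the
subgroup `G` of `GL₂(F_ℓ)`. -/
def ConjStable (ℓ : ℕ) [Fact (Nat.Prime ℓ)] (G : Subgroup (GL (Fin 2) (ZMod ℓ)))
    (V : Submodule (ZMod ℓ) (Matrix (Fin 2) (Fin 2) (ZMod ℓ))) : Prop :=
  ∀ g ∈ G, ∀ v ∈ V,
    ((g : GL (Fin 2) (ZMod ℓ)) : Matrix (Fin 2) (Fin 2) (ZMod ℓ)) * v *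
      ((g⁻¹ : GL (Fin 2) (ZMod ℓ)) : Matrix (Fin 2) (Fin 2) (ZMod ℓ)) ∈ V

/-- Two conjugation-stable submodules of `M₂(F_ℓ)` are isomorphic as
`F_ℓ[G]`-modules: there is a linear equivalence intertwining the conjugation
action of `G`. -/
def ConjIso (ℓ : ℕ) [Fact (Nat.Prime ℓ)] (G : Subgroup (GL (Fin 2) (ZMod ℓ)))
    (V W : Submodule (ZMod ℓ) (Matrix (Fin 2) (Fin 2) (ZMod ℓ))) : Prop :=
  ∃ e : V ≃ₗ[ZMod ℓ] W, ∀ g ∈ G, ∀ v w : V,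
    ((g : GL (Fin 2) (ZMod ℓ)) : Matrix (Fin 2) (Fin 2) (ZMod ℓ)) * (v : Matrix (Fin 2) (Fin 2) (ZMod ℓ)) *
        ((g⁻¹ : GL (Fin 2) (ZMod ℓ)) : Matrix (Fin 2) (Fin 2) (ZMod ℓ)) = (w : Matrix (Fin 2) (Fin 2) (ZMod ℓ)) →
    ((g : GL (Fin 2) (ZMod ℓ)) : Matrix (Fin 2) (Fin 2) (ZMod ℓ)) * (e v : Matrix (Fin 2) (Fin 2) (ZMod ℓ)) *
        ((g⁻¹ : GL (Fin 2) (ZMod ℓ)) : Matrix (Fin 2) (Fin 2) (ZMod ℓ)) = (e w : Matrix (Fin 2) (Fin 2) (ZMod ℓ))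

/-- Let `ℓ > 2` be prime, `C(ℓ) ⊆ GL₂(F_ℓ)` a Cartan
subgroup (the unit group of a 2-dimensional commutative étale (= reduced)
`F_ℓ`-subalgebra `R` of `M₂(F_ℓ)`), with normalizer `C⁺(ℓ)`.  Let `G ⊆ C⁺(ℓ)`
be a subgroup not contained in `C(ℓ)` whose image in `PGL₂(F_ℓ)` contains an
element of order at least 5.  Then under the conjugation action of `G`,
`gl₂(F_ℓ)` decomposes as `V₁ ⊕ V₂ ⊕ V₃` with `V₁ = F_ℓ·I`,
`V₂ = {A ∈ R : tr A = 0}`, `V₃` a 2-dimensional irreducible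
`F_ℓ[G]`-module, and `V₁, V₂, V₃` pairwise non-isomorphic. -/
theorem stmt15 (ℓ : ℕ) [Fact (Nat.Prime ℓ)] (hodd : 2 < ℓ)
    (R : Subalgebra (ZMod ℓ) (Matrix (Fin 2) (Fin 2) (ZMod ℓ)))
    (hcomm : ∀ x ∈ R, ∀ y ∈ R, x * y = y * x)
    (hrank : Module.finrank (ZMod ℓ) R = 2)
    (hetale : ∀ x ∈ R, x * x = 0 → x = 0)
    (G : Subgroup (GL (Fin 2) (ZMod ℓ)))
    (hGnorm : G ≤ Subgroup.normalizer (unitsOf R.toSubring : Set (GL (Fin 2) (ZMod ℓ))))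
    (hGnotC : ¬ G ≤ unitsOf R.toSubring)
    (hord : ∃ g ∈ G, 5 ≤ orderOf
      (QuotientGroup.mk (s := Subgroup.center (GL (Fin 2) (ZMod ℓ))) g)) :
    ∃ V₃ : Submodule (ZMod ℓ) (Matrix (Fin 2) (Fin 2) (ZMod ℓ)),
      ConjStable ℓ G (Submodule.span (ZMod ℓ) {(1 : Matrix (Fin 2) (Fin 2) (ZMod ℓ))}) ∧
      ConjStable ℓ G (Subalgebra.toSubmodule R ⊓
        LinearMap.ker (Matrix.traceLinearMap (Fin 2) (ZMod ℓ) (ZMod ℓ))) ∧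
      ConjStable ℓ G V₃ ∧
      Module.finrank (ZMod ℓ) V₃ = 2 ∧
      -- irreducibility of V₃
      (∀ W : Submodule (ZMod ℓ) (Matrix (Fin 2) (Fin 2) (ZMod ℓ)),
        W ≤ V₃ → ConjStable ℓ G W → W = ⊥ ∨ W = V₃) ∧
      -- gl₂ is the (internal) direct sum V₁ ⊕ V₂ ⊕ V₃
      (Submodule.span (ZMod ℓ) {(1 : Matrix (Fin 2) (Fin 2) (ZMod ℓ))} ⊔
        (Subalgebra.toSubmodule R ⊓
          LinearMap.ker (Matrix.traceLinearMap (Fin 2) (ZMod ℓ) (ZMod ℓ))) ⊔ V₃ = ⊤) ∧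
      (Submodule.span (ZMod ℓ) {(1 : Matrix (Fin 2) (Fin 2) (ZMod ℓ))} ⊓
        (Subalgebra.toSubmodule R ⊓
          LinearMap.ker (Matrix.traceLinearMap (Fin 2) (ZMod ℓ) (ZMod ℓ))) = ⊥) ∧
      ((Submodule.span (ZMod ℓ) {(1 : Matrix (Fin 2) (Fin 2) (ZMod ℓ))} ⊔
        (Subalgebra.toSubmodule R ⊓
          LinearMap.ker (Matrix.traceLinearMap (Fin 2) (ZMod ℓ) (ZMod ℓ)))) ⊓ V₃ = ⊥) ∧
      -- pairwise non-isomorphic as F_ℓ[G]-modules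
      ¬ ConjIso ℓ G (Submodule.span (ZMod ℓ) {(1 : Matrix (Fin 2) (Fin 2) (ZMod ℓ))})
        (Subalgebra.toSubmodule R ⊓
          LinearMap.ker (Matrix.traceLinearMap (Fin 2) (ZMod ℓ) (ZMod ℓ))) ∧
      ¬ ConjIso ℓ G (Submodule.span (ZMod ℓ) {(1 : Matrix (Fin 2) (Fin 2) (ZMod ℓ))}) V₃ ∧
      ¬ ConjIso ℓ G (Subalgebra.toSubmodule R ⊓
          LinearMap.ker (Matrix.traceLinearMap (Fin 2) (ZMod ℓ) (ZMod ℓ))) V₃ := by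
  classical
  have hprime := (Fact.out : Nat.Prime ℓ)
  have hchar : (2 : ZMod ℓ) ≠ 0 := by
    have : ((2:ℕ) : ZMod ℓ) ≠ 0 := by
      rw [Ne, ZMod.natCast_eq_zero_iff]
      intro hdvd
      have := Nat.le_of_dvd (by norm_num) hdvd
      omega
    simpa using this
  have h1M : (1 : Matrix (Fin 2) (Fin 2) (ZMod ℓ)) ≠ 0 := one_ne_zero
  have htr1 : trace (1 : Matrix (Fin 2) (Fin 2) (ZMod ℓ)) = 2 := by
    norm_num [Matrix.trace_fin_two, Matrix.one_apply]
  have hrank' : Module.finrank (ZMod ℓ) (Subalgebra.toSubmodule R) = 2 := by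
    rw [Subalgebra.finrank_toSubmodule]; exact hrank
  -- find u
  obtain ⟨v, hvR, hv1⟩ : ∃ v ∈ Subalgebra.toSubmodule R,
      v ∉ Submodule.span (ZMod ℓ) {(1 : Matrix (Fin 2) (Fin 2) (ZMod ℓ))} := by
    by_contra hcon
    push_neg at hcon
    have hle : Subalgebra.toSubmodule R ≤
        Submodule.span (ZMod ℓ) {(1 : Matrix (Fin 2) (Fin 2) (ZMod ℓ))} := hcon
    have := Submodule.finrank_mono hle
    rw [hrank', finrank_span_singleton h1M] at this
    omega
  obtain ⟨u, huR, htru, hu1⟩ : ∃ u : Matrix (Fin 2) (Fin 2) (ZMod ℓ), u ∈ R ∧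
      trace u = 0 ∧ u ∉ Submodule.span (ZMod ℓ) {(1 : Matrix (Fin 2) (Fin 2) (ZMod ℓ))} := by
    refine ⟨v - ((trace v)/2) • 1, ?_, ?_, ?_⟩
    · have hvR' : v ∈ R := hvR
      exact R.sub_mem hvR' (R.smul_mem R.one_mem _)
    · rw [Matrix.trace_sub, Matrix.trace_smul, htr1]
      rw [smul_eq_mul, div_mul_cancel₀ _ hchar, sub_self]
    · intro hmem
      apply hv1
      have hveq : v = (v - ((trace v)/2) • 1) + ((trace v)/2) • 1 := by abel
      rw [hveq]
      exact Submodule.add_mem _ hmem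
        (Submodule.smul_mem _ _ (Submodule.mem_span_singleton_self _))
  have hu0 : u ≠ 0 := fun h => hu1 (h ▸ Submodule.zero_mem _)
  obtain ⟨d, huu, hd⟩ : ∃ d : ZMod ℓ, u * u = d • 1 ∧ d ≠ 0 := by
    refine ⟨-(det u), sq_of_trace_zero' u htru, ?_⟩
    intro h
    apply hu0
    exact hetale u huR (by rw [sq_of_trace_zero' u htru, h, zero_smul])
  have scalar_inj : ∀ a b : ZMod ℓ, a • (1 : Matrix (Fin 2) (Fin 2) (ZMod ℓ)) = b • 1 → a = b := by
    intro a b h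
    have := congrFun (congrFun h 0) 0
    simpa [Matrix.smul_apply, Matrix.one_apply] using this
  have coeffext : ∀ a b : ZMod ℓ, a • (1 : Matrix (Fin 2) (Fin 2) (ZMod ℓ)) + b • u = 0 →
      a = 0 ∧ b = 0 := by
    intro a b h
    have ht := congrArg Matrix.trace h
    rw [Matrix.trace_add, Matrix.trace_smul, Matrix.trace_smul, htr1, htru,
      Matrix.trace_zero] at ht
    have ha : a = 0 := by
      have : a * 2 = 0 := by simpa [smul_eq_mul] using ht
      rcases mul_eq_zero.mp this with h' | h'
      · exact h'
      · exact absurd h' hchar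
    refine ⟨ha, ?_⟩
    rw [ha, zero_smul, zero_add] at h
    rcases smul_eq_zero.mp h with h' | h'
    · exact h'
    · exact absurd h' hu0
  have huniq : ∀ a b c e : ZMod ℓ,
      a • (1 : Matrix (Fin 2) (Fin 2) (ZMod ℓ)) + b • u = c • 1 + e • u → a = c ∧ b = e := by
    intro a b c e h
    have h0 : (a - c) • (1 : Matrix (Fin 2) (Fin 2) (ZMod ℓ)) + (b - e) • u = 0 := by
      rw [sub_smul, sub_smul]
      rw [← sub_eq_zero] at h
      linear_combination (norm := module) h
    obtain ⟨h1, h2⟩ := coeffext _ _ h0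
    constructor <;> [skip; skip] <;> [exact sub_eq_zero.mp h1; exact sub_eq_zero.mp h2]
  have hind : LinearIndependent (ZMod ℓ) ![(1 : Matrix (Fin 2) (Fin 2) (ZMod ℓ)), u] :=
    LinearIndependent.pair_iff.mpr coeffext
  have hpairrange : ∀ (a b : Matrix (Fin 2) (Fin 2) (ZMod ℓ)),
      Set.range ![a, b] = {a, b} := by
    intro a b
    ext x
    simp [Fin.exists_fin_two]
    tauto
  have hfrspan : Module.finrank (ZMod ℓ)
      (Submodule.span (ZMod ℓ) {(1 : Matrix (Fin 2) (Fin 2) (ZMod ℓ)), u}) = 2 := by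
    rw [← hpairrange, finrank_span_eq_card hind]
    simp
  have hspan : Subalgebra.toSubmodule R
      = Submodule.span (ZMod ℓ) {(1 : Matrix (Fin 2) (Fin 2) (ZMod ℓ)), u} := by
    symm
    apply Submodule.eq_of_le_of_finrank_le
    · rw [Submodule.span_le]
      rintro x (rfl | rfl)
      · exact R.one_mem
      · exact huR
    · rw [hrank', hfrspan]
  have memR : ∀ A : Matrix (Fin 2) (Fin 2) (ZMod ℓ),
      A ∈ R ↔ ∃ x y : ZMod ℓ, x • 1 + y • u = A := by
    intro A
    rw [← Subalgebra.mem_toSubmodule, hspan, Submodule.mem_span_pair]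
  have hinvR : ∀ g : GL (Fin 2) (ZMod ℓ),
      ((g : GL (Fin 2) (ZMod ℓ)) : Matrix (Fin 2) (Fin 2) (ZMod ℓ)) ∈ R →
      ((g⁻¹ : GL (Fin 2) (ZMod ℓ)) : Matrix (Fin 2) (Fin 2) (ZMod ℓ)) ∈ R := by
    intro g hg
    set m : Matrix (Fin 2) (Fin 2) (ZMod ℓ) := ((g : GL (Fin 2) (ZMod ℓ)) : Matrix (Fin 2) (Fin 2) (ZMod ℓ)) with hm
    set m' : Matrix (Fin 2) (Fin 2) (ZMod ℓ) := ((g⁻¹ : GL (Fin 2) (ZMod ℓ)) :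
      Matrix (Fin 2) (Fin 2) (ZMod ℓ)) with hm'
    have h1 : m * (trace m • 1 - m) = det m • 1 := mul_trace_smul_sub' _
    have hdetinv : det m' * det m = 1 := by
      rw [← Matrix.det_mul, coe_inv_mul' g, Matrix.det_one]
    have h2 : (trace m • 1 - m) = det m • m' := by
      calc trace m • (1 : Matrix (Fin 2) (Fin 2) (ZMod ℓ)) - m
          = (m' * m) * (trace m • 1 - m) := by rw [coe_inv_mul' g, Matrix.one_mul]
        _ = m' * (det m • 1) := by rw [Matrix.mul_assoc, h1]
        _ = det m • m' := by rw [Matrix.mul_smul, Matrix.mul_one]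
    have h3 : m' = det m' • (trace m • 1 - m) := by
      rw [h2, smul_smul, hdetinv, one_smul]
    rw [h3]
    exact R.smul_mem (R.sub_mem (R.smul_mem R.one_mem _) hg) _
  have memC : ∀ g : GL (Fin 2) (ZMod ℓ), g ∈ unitsOf R.toSubring ↔
      ((g : GL (Fin 2) (ZMod ℓ)) : Matrix (Fin 2) (Fin 2) (ZMod ℓ)) ∈ R := by
    intro g
    constructor
    · intro h
      obtain ⟨h1, h2⟩ := h
      exact Subalgebra.mem_toSubring.mp h1
    · intro h
      exact ⟨Subalgebra.mem_toSubring.mpr h, Subalgebra.mem_toSubring.mpr (hinvR g h)⟩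
  -- u as a unit
  have hUP : u * ((d⁻¹ • u) : Matrix (Fin 2) (Fin 2) (ZMod ℓ)) = 1 := by
    rw [Matrix.mul_smul, huu, smul_smul, inv_mul_cancel₀ hd, one_smul]
  have hUP' : ((d⁻¹ • u) : Matrix (Fin 2) (Fin 2) (ZMod ℓ)) * u = 1 := by
    rw [Matrix.smul_mul, huu, smul_smul, inv_mul_cancel₀ hd, one_smul]
  set U : GL (Fin 2) (ZMod ℓ) := ⟨u, d⁻¹ • u, hUP, hUP'⟩ with hU_def
  have hUmem : U ∈ unitsOf R.toSubring :=
    ⟨Subalgebra.mem_toSubring.mpr huR, Subalgebra.mem_toSubring.mpr (R.smul_mem huR _)⟩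
  have epsSpec : ∀ g ∈ G, ∃ ε : ZMod ℓ, ε * ε = 1 ∧
      ((g : GL (Fin 2) (ZMod ℓ)) : Matrix (Fin 2) (Fin 2) (ZMod ℓ)) * u *
        ((g⁻¹ : GL (Fin 2) (ZMod ℓ)) : Matrix (Fin 2) (Fin 2) (ZMod ℓ)) = ε • u ∧
      (ε = 1 ↔ ((g : GL (Fin 2) (ZMod ℓ)) : Matrix (Fin 2) (Fin 2) (ZMod ℓ)) ∈ R) := by
    intro g hg
    set m : Matrix (Fin 2) (Fin 2) (ZMod ℓ) := ((g : GL (Fin 2) (ZMod ℓ)) : Matrix (Fin 2) (Fin 2) (ZMod ℓ)) with hm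
    set m' : Matrix (Fin 2) (Fin 2) (ZMod ℓ) := ((g⁻¹ : GL (Fin 2) (ZMod ℓ)) :
      Matrix (Fin 2) (Fin 2) (ZMod ℓ)) with hm'
    have hmm' : m * m' = 1 := coe_mul_inv' g
    have hm'm : m' * m = 1 := coe_inv_mul' g
    have hwR : m * u * m' ∈ R := by
      have hmem := (Subgroup.mem_normalizer_iff.mp (hGnorm hg) U).mp hUmem
      obtain ⟨h1, _⟩ := hmem
      have hval : ((g * U * g⁻¹ : GL (Fin 2) (ZMod ℓ)) :
          Matrix (Fin 2) (Fin 2) (ZMod ℓ)) = m * u * m' := by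
        rw [Units.val_mul, Units.val_mul]
      rw [hval] at h1
      exact Subalgebra.mem_toSubring.mp h1
    obtain ⟨x, y, hxy⟩ := (memR _).mp hwR
    have htrw : trace (m * u * m') = 0 := by
      rw [Matrix.trace_mul_comm, ← Matrix.mul_assoc, hm'm, Matrix.one_mul, htru]
    have hx0 : x = 0 := by
      have ht := congrArg Matrix.trace hxy
      rw [Matrix.trace_add, Matrix.trace_smul, Matrix.trace_smul, htr1, htru, htrw] at ht
      have : x * 2 = 0 := by simpa [smul_eq_mul] using ht
      rcases mul_eq_zero.mp this with h' | h'
      · exact h'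
      · exact absurd h' hchar
    have hw : m * u * m' = y • u := by rw [← hxy, hx0, zero_smul, zero_add]
    have hsq1 : (m * u * m') * (m * u * m') = d • 1 := by
      have step1 : (m * u * m') * (m * u * m') = m * u * ((m' * m) * (u * m')) := by
        simp only [Matrix.mul_assoc]
      rw [step1, hm'm, Matrix.one_mul, ← Matrix.mul_assoc, Matrix.mul_assoc m u u, huu,
        Matrix.mul_smul, Matrix.mul_one, Matrix.smul_mul, hmm']
    have hsq2 : (m * u * m') * (m * u * m') = (y * y * d) • 1 := by
      rw [hw, Matrix.smul_mul, Matrix.mul_smul, smul_smul, huu, smul_smul]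
    have hyy : y * y = 1 := by
      have h7 := scalar_inj _ _ (hsq2.symm.trans hsq1)
      have h8 : y * y * d = 1 * d := by rw [one_mul]; exact h7
      exact mul_right_cancel₀ hd h8
    refine ⟨y, hyy, hw, ?_, ?_⟩
    · intro hy
      have hgu : m * u = u * m := by
        have h5 : m * u * m' * m = u * m := by rw [hw, hy, one_smul]
        rwa [Matrix.mul_assoc, hm'm, Matrix.mul_one] at h5
      obtain ⟨x', y', h⟩ := commutant_eq' hchar u htru d huu hd m hgu
      rw [h]
      exact R.add_mem (R.smul_mem R.one_mem _) (R.smul_mem huR _)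
    · intro hR
      have hcu : m * u = u * m := hcomm m hR u huR
      have h5 : m * u * m' = u := by
        rw [hcu, Matrix.mul_assoc, hmm', Matrix.mul_one]
      rw [hw] at h5
      have h6 : (y - 1) • u = 0 := by rw [sub_smul, one_smul, h5, sub_self]
      rcases smul_eq_zero.mp h6 with h' | h'
      · exact sub_eq_zero.mp h'
      · exact absurd h' hu0
  -- the element g₀ outside the Cartan
  obtain ⟨g₀, hg₀G, hg₀C⟩ := SetLike.not_le_iff_exists.mp hGnotC
  obtain ⟨ε₀, hε₀sq, hε₀, hε₀iff⟩ := epsSpec g₀ hg₀G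
  set m₀ : Matrix (Fin 2) (Fin 2) (ZMod ℓ) :=
    ((g₀ : GL (Fin 2) (ZMod ℓ)) : Matrix (Fin 2) (Fin 2) (ZMod ℓ)) with hm₀_def
  set m₀' : Matrix (Fin 2) (Fin 2) (ZMod ℓ) :=
    ((g₀⁻¹ : GL (Fin 2) (ZMod ℓ)) : Matrix (Fin 2) (Fin 2) (ZMod ℓ)) with hm₀'_def
  have hm₀m₀' : m₀ * m₀' = 1 := coe_mul_inv' g₀
  have hm₀'m₀ : m₀' * m₀ = 1 := coe_inv_mul' g₀
  have hm₀R : m₀ ∉ R := fun h => hg₀C ((memC g₀).mpr h)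
  have hε₀m1 : ε₀ = -1 := by
    have h1 : ε₀ ≠ 1 := fun h => hm₀R (hε₀iff.mp h)
    have h2 : (ε₀ - 1) * (ε₀ + 1) = 0 := by linear_combination hε₀sq
    rcases mul_eq_zero.mp h2 with h' | h'
    · exact absurd (sub_eq_zero.mp h') h1
    · exact eq_neg_of_add_eq_zero_left h'
  have hconj₀ : m₀ * u * m₀' = -u := by
    rw [hε₀, hε₀m1, neg_smul, one_smul]
  have hm₀u : m₀ * u = -(u * m₀) := by
    have h5 : m₀ * u * m₀' * m₀ = -u * m₀ := by rw [hconj₀]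
    rw [Matrix.mul_assoc, hm₀'m₀, Matrix.mul_one, Matrix.neg_mul] at h5
    exact h5
  -- V₃ : the anticommutant of u
  set V₃ : Submodule (ZMod ℓ) (Matrix (Fin 2) (Fin 2) (ZMod ℓ)) :=
    { carrier := {A | u * A + A * u = 0}
      zero_mem' := by simp
      add_mem' := by
        intro A B hA hB
        simp only [Set.mem_setOf_eq] at hA hB ⊢
        rw [Matrix.mul_add, Matrix.add_mul]
        linear_combination (norm := noncomm_ring) hA + hB
      smul_mem' := by
        intro c A hA
        simp only [Set.mem_setOf_eq] at hA ⊢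
        rw [Matrix.mul_smul, Matrix.smul_mul, ← smul_add, hA, smul_zero] } with hV₃_def
  have memV₃ : ∀ A : Matrix (Fin 2) (Fin 2) (ZMod ℓ), A ∈ V₃ ↔ u * A + A * u = 0 :=
    fun A => Iff.rfl
  have hm₀V₃ : m₀ ∈ V₃ := by
    rw [memV₃, hm₀u]
    abel
  have hum₀V₃ : u * m₀ ∈ V₃ := by
    rw [memV₃]
    have e1 : u * (u * m₀) = d • m₀ := by
      rw [← Matrix.mul_assoc, huu, Matrix.smul_mul, Matrix.one_mul]
    have e2 : (u * m₀) * u = -(d • m₀) := by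
      rw [Matrix.mul_assoc, hm₀u, Matrix.mul_neg, ← Matrix.mul_assoc, huu,
        Matrix.smul_mul, Matrix.one_mul]
    rw [e1, e2]
    abel
  have hinf : Subalgebra.toSubmodule R ⊓ V₃ = ⊥ := by
    rw [eq_bot_iff]
    rintro x ⟨hx1, hx2⟩
    have hx1' : x ∈ R := hx1
    have hcomx : x * u = u * x := hcomm x hx1' u huR
    have hanti := (memV₃ x).mp hx2
    have hux : u * x = 0 := by
      have h2 : u * x + u * x = 0 := by nth_rewrite 2 [← hcomx]; exact hanti
      have h3 : (2 : ZMod ℓ) • (u * x) = 0 := by rw [two_smul]; exact h2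
      rcases smul_eq_zero.mp h3 with h' | h'
      · exact absurd h' hchar
      · exact h'
    have h4 : d • x = 0 := by
      have : d • x = u * (u * x) := by
        rw [← Matrix.mul_assoc, huu, Matrix.smul_mul, Matrix.one_mul]
      rw [this, hux, Matrix.mul_zero]
    rw [Submodule.mem_bot]
    rcases smul_eq_zero.mp h4 with h' | h'
    · exact absurd h' hd
    · exact h'
  have hsup : Subalgebra.toSubmodule R ⊔ V₃ = ⊤ := by
    rw [eq_top_iff]
    intro A _
    set C : Matrix (Fin 2) (Fin 2) (ZMod ℓ) :=
      (2 : ZMod ℓ)⁻¹ • A + ((2 : ZMod ℓ)⁻¹ * d⁻¹) • (u * A * u) with hC_def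
    have e1 : (u * A * u) * u = d • (u * A) := by
      rw [Matrix.mul_assoc (u * A) u u, huu, Matrix.mul_smul, Matrix.mul_one]
    have e2 : u * (u * A * u) = d • (A * u) := by
      rw [← Matrix.mul_assoc u (u * A) u, ← Matrix.mul_assoc u u A, huu,
        Matrix.smul_mul, Matrix.one_mul, Matrix.smul_mul]
    have hcoef : (2 : ZMod ℓ)⁻¹ * d⁻¹ * d = (2 : ZMod ℓ)⁻¹ := by
      field_simp
    have hCu : C * u = u * C := by
      rw [hC_def]
      simp only [add_mul, mul_add, Matrix.smul_mul, Matrix.mul_smul, e1, e2, smul_smul,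
        hcoef]
      match_scalars <;> ring
    obtain ⟨xc, yc, hCxy⟩ := commutant_eq' hchar u htru d huu hd C hCu
    have hCR : C ∈ Subalgebra.toSubmodule R := by
      rw [hCxy]
      exact Submodule.add_mem _ (Submodule.smul_mem _ _ R.one_mem)
        (Submodule.smul_mem _ _ huR)
    have hcc : u * C + C * u = u * A + A * u := by
      rw [hC_def]
      simp only [add_mul, mul_add, Matrix.smul_mul, Matrix.mul_smul, e1, e2, smul_smul,
        hcoef]
      match_scalars <;> (try field_simp) <;> (try ring) <;> (try norm_num)
    have hBV : A - C ∈ V₃ := by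
      rw [memV₃]
      have hsplit : u * (A - C) + (A - C) * u = (u * A + A * u) - (u * C + C * u) := by
        rw [Matrix.mul_sub, Matrix.sub_mul]; abel
      rw [hsplit, hcc, sub_self]
    rw [Submodule.mem_sup]
    exact ⟨C, hCR, A - C, hBV, by abel⟩
  have hrk4 : Module.finrank (ZMod ℓ) (Matrix (Fin 2) (Fin 2) (ZMod ℓ)) = 4 := by
    rw [Module.finrank_matrix]
    simp
  have hrkV₃ : Module.finrank (ZMod ℓ) V₃ = 2 := by
    have h := Submodule.finrank_sup_add_finrank_inf_eq (Subalgebra.toSubmodule R) V₃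
    rw [hsup, hinf, hrank', finrank_top, hrk4, finrank_bot] at h
    omega
  -- product formula in R
  have hmul : ∀ a b c e : ZMod ℓ,
      (a • (1 : Matrix (Fin 2) (Fin 2) (ZMod ℓ)) + b • u) * (c • 1 + e • u)
        = (a*c + d*b*e) • 1 + (a*e + b*c) • u := by
    intro a b c e
    simp only [add_mul, mul_add, Matrix.smul_mul, Matrix.mul_smul, Matrix.one_mul,
      Matrix.mul_one, huu, smul_smul]
    match_scalars <;> ring
  -- obtain the Cartan element h with both coordinates nonzero
  obtain ⟨g₁, hg₁G, hg₁ord⟩ := hord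
  obtain ⟨h, hhG, x, y, hx, hy, hn⟩ : ∃ h ∈ G, ∃ x y : ZMod ℓ, x ≠ 0 ∧ y ≠ 0 ∧
      ((h : GL (Fin 2) (ZMod ℓ)) : Matrix (Fin 2) (Fin 2) (ZMod ℓ)) = x • 1 + y • u := by
    by_cases hg₁R : ((g₁ : GL (Fin 2) (ZMod ℓ)) : Matrix (Fin 2) (Fin 2) (ZMod ℓ)) ∈ R
    · obtain ⟨x, y, hxy⟩ := (memR _).mp hg₁R
      refine ⟨g₁, hg₁G, x, y, ?_, ?_, hxy.symm⟩
      · intro hx0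
        have hsc : ((g₁^2 : GL (Fin 2) (ZMod ℓ)) : Matrix (Fin 2) (Fin 2) (ZMod ℓ))
            = (y * y * d) • 1 := by
          rw [pow_two, Units.val_mul, ← hxy, hx0, zero_smul, zero_add, Matrix.smul_mul,
            Matrix.mul_smul, smul_smul, huu, smul_smul]
        have hc := scalar_mem_center' (g₁^2) _ hsc
        have := order_le_of_pow_central' g₁ 2 (by norm_num) hc
        omega
      · intro hy0
        have hsc : ((g₁ : GL (Fin 2) (ZMod ℓ)) : Matrix (Fin 2) (Fin 2) (ZMod ℓ))
            = x • 1 := by rw [← hxy, hy0, zero_smul, add_zero]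
        have hc := scalar_mem_center' g₁ _ hsc
        have := order_le_of_pow_central' g₁ 1 (by norm_num) (by rwa [pow_one])
        omega
    · obtain ⟨ε₁, hε₁sq, hε₁, hε₁iff⟩ := epsSpec g₁ hg₁G
      have hε₁m1 : ε₁ = -1 := by
        have h1 : ε₁ ≠ 1 := fun hh => hg₁R (hε₁iff.mp hh)
        have h2 : (ε₁ - 1) * (ε₁ + 1) = 0 := by linear_combination hε₁sq
        rcases mul_eq_zero.mp h2 with h' | h'
        · exact absurd (sub_eq_zero.mp h') h1
        · exact eq_neg_of_add_eq_zero_left h'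
      set m₁ : Matrix (Fin 2) (Fin 2) (ZMod ℓ) :=
        ((g₁ : GL (Fin 2) (ZMod ℓ)) : Matrix (Fin 2) (Fin 2) (ZMod ℓ)) with hm₁_def
      have hm₁m₁' : m₁ * ((g₁⁻¹ : GL (Fin 2) (ZMod ℓ)) : Matrix (Fin 2) (Fin 2) (ZMod ℓ))
          = 1 := coe_mul_inv' g₁
      have hm₁'m₁ : ((g₁⁻¹ : GL (Fin 2) (ZMod ℓ)) : Matrix (Fin 2) (Fin 2) (ZMod ℓ)) * m₁
          = 1 := coe_inv_mul' g₁
      have hm₁u : m₁ * u = -(u * m₁) := by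
        have h5 : m₁ * u * ((g₁⁻¹ : GL (Fin 2) (ZMod ℓ)) :
            Matrix (Fin 2) (Fin 2) (ZMod ℓ)) * m₁ = -u * m₁ := by
          rw [hε₁, hε₁m1, neg_smul, one_smul, Matrix.neg_mul]
        rw [Matrix.mul_assoc, hm₁'m₁, Matrix.mul_one, Matrix.neg_mul] at h5
        exact h5
      have hcomm2 : (m₁ * m₁) * u = u * (m₁ * m₁) := by
        rw [Matrix.mul_assoc, hm₁u, Matrix.mul_neg, ← Matrix.mul_assoc, hm₁u,
          Matrix.neg_mul, neg_neg, Matrix.mul_assoc]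
      obtain ⟨x, y, hxy⟩ := commutant_eq' hchar u htru d huu hd (m₁ * m₁) hcomm2
      have hval2 : ((g₁^2 : GL (Fin 2) (ZMod ℓ)) : Matrix (Fin 2) (Fin 2) (ZMod ℓ))
          = m₁ * m₁ := by rw [pow_two, Units.val_mul]
      refine ⟨g₁^2, pow_mem hg₁G 2, x, y, ?_, ?_, by rw [hval2, hxy]⟩
      · intro hx0
        have hsc : ((g₁^4 : GL (Fin 2) (ZMod ℓ)) : Matrix (Fin 2) (Fin 2) (ZMod ℓ))
            = (y * y * d) • 1 := by
          have : (4 : ℕ) = 2 + 2 := by norm_num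
          rw [this, pow_add, Units.val_mul, hval2, hxy, hx0, zero_smul, zero_add,
            Matrix.smul_mul, Matrix.mul_smul, smul_smul, huu, smul_smul]
        have hc := scalar_mem_center' (g₁^4) _ hsc
        have := order_le_of_pow_central' g₁ 4 (by norm_num) hc
        omega
      · intro hy0
        have hsc : ((g₁^2 : GL (Fin 2) (ZMod ℓ)) : Matrix (Fin 2) (Fin 2) (ZMod ℓ))
            = x • 1 := by rw [hval2, hxy, hy0, zero_smul, add_zero]
        have hc := scalar_mem_center' (g₁^2) _ hsc
        have := order_le_of_pow_central' g₁ 2 (by norm_num) hc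
        omega
  -- coefficients of h⁻¹
  have hhR : ((h : GL (Fin 2) (ZMod ℓ)) : Matrix (Fin 2) (Fin 2) (ZMod ℓ)) ∈ R := by
    rw [hn]; exact R.add_mem (R.smul_mem R.one_mem _) (R.smul_mem huR _)
  obtain ⟨x', y', hn'⟩ := (memR _).mp (hinvR h hhR)
  have hone : (x • (1 : Matrix (Fin 2) (Fin 2) (ZMod ℓ)) + y • u) * (x' • 1 + y' • u)
      = 1 := by rw [← hn, hn']; exact coe_mul_inv' h
  have heqs : x * x' + d * y * y' = 1 ∧ x * y' + y * x' = 0 := by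
    rw [hmul] at hone
    have h1 : (x*x' + d*y*y') • (1 : Matrix (Fin 2) (Fin 2) (ZMod ℓ)) + (x*y' + y*x') • u
        = (1 : ZMod ℓ) • 1 + (0 : ZMod ℓ) • u := by
      rw [hone, one_smul, zero_smul, add_zero]
    exact huniq _ _ _ _ h1
  set Q : ZMod ℓ := y * x' - x * y' with hQ_def
  have hQ : Q ≠ 0 := by
    intro hQ0
    have h3 : y * x' = 0 := by
      have h2 : (2 : ZMod ℓ) * (y * x') = 0 := by
        rw [hQ_def] at hQ0
        linear_combination hQ0 + heqs.2
      rcases mul_eq_zero.mp h2 with h' | h'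
      · exact absurd h' hchar
      · exact h'
    have hx'0 : x' = 0 := by
      rcases mul_eq_zero.mp h3 with h' | h'
      · exact absurd h' hy
      · exact h'
    have hy'0 : y' = 0 := by
      have h4 : x * y' = 0 := by linear_combination heqs.2 - h3
      rcases mul_eq_zero.mp h4 with h' | h'
      · exact absurd h' hx
      · exact h'
    have : (1 : ZMod ℓ) = 0 := by
      have := heqs.1
      rw [hx'0, hy'0] at this
      linear_combination -this
    simp at this
  -- V₃ = span {m₀, u * m₀}
  have hindV : LinearIndependent (ZMod ℓ) ![m₀, u * m₀] := by
    rw [LinearIndependent.pair_iff]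
    intro s t hst
    have h1 : (s • (1 : Matrix (Fin 2) (Fin 2) (ZMod ℓ)) + t • u) * m₀ = 0 := by
      rw [add_mul, Matrix.smul_mul, Matrix.smul_mul, Matrix.one_mul]
      exact hst
    have h2 : s • (1 : Matrix (Fin 2) (Fin 2) (ZMod ℓ)) + t • u = 0 := by
      calc s • (1 : Matrix (Fin 2) (Fin 2) (ZMod ℓ)) + t • u
          = ((s • (1 : Matrix (Fin 2) (Fin 2) (ZMod ℓ)) + t • u) * m₀) * m₀' := by
            rw [Matrix.mul_assoc, hm₀m₀', Matrix.mul_one]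
        _ = 0 := by rw [h1, Matrix.zero_mul]
    exact coeffext _ _ h2
  have hfrspanV : Module.finrank (ZMod ℓ)
      (Submodule.span (ZMod ℓ) {m₀, u * m₀}) = 2 := by
    rw [← hpairrange, finrank_span_eq_card hindV]
    simp
  have hV₃span : V₃ = Submodule.span (ZMod ℓ) {m₀, u * m₀} := by
    symm
    apply Submodule.eq_of_le_of_finrank_le
    · rw [Submodule.span_le]
      rintro z (rfl | rfl)
      · exact hm₀V₃
      · exact hum₀V₃
    · rw [hrkV₃, hfrspanV]
  -- conjugation stability of V₁
  have hstab1 : ConjStable ℓ G (Submodule.span (ZMod ℓ)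
      {(1 : Matrix (Fin 2) (Fin 2) (ZMod ℓ))}) := by
    intro g hg w hw
    obtain ⟨c, hc⟩ := Submodule.mem_span_singleton.mp hw
    have hcc : ((g : GL (Fin 2) (ZMod ℓ)) : Matrix (Fin 2) (Fin 2) (ZMod ℓ)) * w *
        ((g⁻¹ : GL (Fin 2) (ZMod ℓ)) : Matrix (Fin 2) (Fin 2) (ZMod ℓ))
        = c • (1 : Matrix (Fin 2) (Fin 2) (ZMod ℓ)) := by
      rw [← hc, Matrix.mul_smul, Matrix.smul_mul, Matrix.mul_one, coe_mul_inv' g]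
    rw [hcc]
    exact Submodule.smul_mem _ _ (Submodule.mem_span_singleton_self _)
  -- V₂ facts
  have memV₂ : ∀ w, w ∈ (Subalgebra.toSubmodule R ⊓
      LinearMap.ker (Matrix.traceLinearMap (Fin 2) (ZMod ℓ) (ZMod ℓ))) ↔
      ∃ b : ZMod ℓ, b • u = w := by
    intro w
    constructor
    · rintro ⟨hw1, hw2⟩
      have hw1' : w ∈ R := hw1
      obtain ⟨a, b, hab⟩ := (memR w).mp hw1'
      have htrw : trace w = 0 := hw2
      have ha0 : a = 0 := by
        have ht := congrArg Matrix.trace hab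
        rw [Matrix.trace_add, Matrix.trace_smul, Matrix.trace_smul, htr1, htru, htrw] at ht
        have : a * 2 = 0 := by simpa [smul_eq_mul] using ht
        rcases mul_eq_zero.mp this with h' | h'
        · exact h'
        · exact absurd h' hchar
      refine ⟨b, ?_⟩
      rw [← hab, ha0, zero_smul, zero_add]
    · rintro ⟨b, rfl⟩
      constructor
      · exact Submodule.smul_mem _ _ huR
      · have : trace (b • u) = 0 := by rw [Matrix.trace_smul, htru, smul_zero]
        exact this
  have hstab2 : ConjStable ℓ G (Subalgebra.toSubmodule R ⊓
      LinearMap.ker (Matrix.traceLinearMap (Fin 2) (ZMod ℓ) (ZMod ℓ))) := by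
    intro g hg w hw
    obtain ⟨b, hb⟩ := (memV₂ w).mp hw
    obtain ⟨ε, hεsq, hε, _⟩ := epsSpec g hg
    have hcc : ((g : GL (Fin 2) (ZMod ℓ)) : Matrix (Fin 2) (Fin 2) (ZMod ℓ)) * w *
        ((g⁻¹ : GL (Fin 2) (ZMod ℓ)) : Matrix (Fin 2) (Fin 2) (ZMod ℓ)) = (b * ε) • u := by
      rw [← hb, Matrix.mul_smul, Matrix.smul_mul, hε, smul_smul]
    rw [hcc]
    exact (memV₂ _).mpr ⟨b * ε, rfl⟩
  -- conjugation stability of V₃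
  have hstab3 : ConjStable ℓ G V₃ := by
    intro g hg w hw
    obtain ⟨ε, hεsq, hε, _⟩ := epsSpec g hg
    set m : Matrix (Fin 2) (Fin 2) (ZMod ℓ) :=
      ((g : GL (Fin 2) (ZMod ℓ)) : Matrix (Fin 2) (Fin 2) (ZMod ℓ)) with hm_def
    set m' : Matrix (Fin 2) (Fin 2) (ZMod ℓ) :=
      ((g⁻¹ : GL (Fin 2) (ZMod ℓ)) : Matrix (Fin 2) (Fin 2) (ZMod ℓ)) with hm'_def
    have hmm' : m * m' = 1 := coe_mul_inv' g
    have hm'm : m' * m = 1 := coe_inv_mul' g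
    have hmu : m * u = ε • (u * m) := by
      have h5 : m * u * m' * m = (ε • u) * m := by rw [hε]
      rwa [Matrix.mul_assoc, hm'm, Matrix.mul_one, Matrix.smul_mul] at h5
    have hum : u * m = ε • (m * u) := by
      rw [hmu, smul_smul, hεsq, one_smul]
    have h5 : u * m' = ε • (m' * u) := by
      calc u * m' = (m' * m) * (u * m') := by rw [hm'm, Matrix.one_mul]
        _ = m' * (m * u * m') := by simp only [Matrix.mul_assoc]
        _ = m' * (ε • u) := by rw [hε]
        _ = ε • (m' * u) := by rw [Matrix.mul_smul]
    have hm'u : m' * u = ε • (u * m') := by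
      rw [h5, smul_smul, hεsq, one_smul]
    have hanti := (memV₃ w).mp hw
    rw [memV₃]
    have hkey : u * (m * w * m') + (m * w * m') * u
        = ε • (m * (u * w + w * u) * m') := by
      calc u * (m * w * m') + (m * w * m') * u
          = (u * m) * (w * m') + (m * w) * (m' * u) := by
            simp only [Matrix.mul_assoc]
        _ = (ε • (m * u)) * (w * m') + (m * w) * (ε • (u * m')) := by rw [hum, hm'u]
        _ = ε • (m * (u * w + w * u) * m') := by
            simp only [Matrix.smul_mul, Matrix.mul_smul, Matrix.mul_add, Matrix.add_mul,
              smul_add, Matrix.mul_assoc]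
    rw [hkey, hanti, Matrix.mul_zero, Matrix.zero_mul, smul_zero]
  -- conjugation action of g₀ on V₃
  have hconjg₀ : ∀ a b : ZMod ℓ, m₀ * (a • m₀ + b • (u * m₀)) * m₀'
      = a • m₀ - b • (u * m₀) := by
    intro a b
    have k1 : m₀ * m₀ * m₀' = m₀ := by rw [Matrix.mul_assoc, hm₀m₀', Matrix.mul_one]
    have k2 : m₀ * (u * m₀) * m₀' = -(u * m₀) := by
      calc m₀ * (u * m₀) * m₀' = (m₀ * u) * (m₀ * m₀') := by simp only [Matrix.mul_assoc]
        _ = m₀ * u := by rw [hm₀m₀', Matrix.mul_one]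
        _ = -(u * m₀) := hm₀u
    calc m₀ * (a • m₀ + b • (u * m₀)) * m₀'
        = a • (m₀ * m₀ * m₀') + b • (m₀ * (u * m₀) * m₀') := by
          simp only [Matrix.mul_add, Matrix.add_mul, Matrix.mul_smul, Matrix.smul_mul]
      _ = a • m₀ - b • (u * m₀) := by rw [k1, k2, smul_neg, ← sub_eq_add_neg]
  -- conjugation action of h on V₃
  have hconjh : ∀ A : Matrix (Fin 2) (Fin 2) (ZMod ℓ), A ∈ V₃ →
      ((h : GL (Fin 2) (ZMod ℓ)) : Matrix (Fin 2) (Fin 2) (ZMod ℓ)) * A *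
        ((h⁻¹ : GL (Fin 2) (ZMod ℓ)) : Matrix (Fin 2) (Fin 2) (ZMod ℓ))
        = (x * x' - d * y * y') • A + Q • (u * A) := by
    intro A hA
    rw [hn, ← hn', hQ_def]
    exact conj_formula' u A d x y x' y' huu ((memV₃ A).mp hA)
  -- irreducibility
  have hirr : ∀ W : Submodule (ZMod ℓ) (Matrix (Fin 2) (Fin 2) (ZMod ℓ)),
      W ≤ V₃ → ConjStable ℓ G W → W = ⊥ ∨ W = V₃ := by
    intro W hWle hWst
    by_cases hW : W = ⊥
    · exact Or.inl hW
    right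
    obtain ⟨w, hwW, hw0⟩ := (Submodule.ne_bot_iff W).mp hW
    obtain ⟨a, b, hab⟩ := Submodule.mem_span_pair.mp (hV₃span ▸ hWle hwW)
    have key1 : m₀ ∈ W → u * m₀ ∈ W := by
      intro hm
      have h1 := hWst h hhG m₀ hm
      rw [hconjh m₀ hm₀V₃] at h1
      have h2 : Q • (u * m₀) = ((x * x' - d * y * y') • m₀ + Q • (u * m₀))
          - (x * x' - d * y * y') • m₀ := by abel
      have h3 : Q • (u * m₀) ∈ W := by
        rw [h2]; exact Submodule.sub_mem _ h1 (Submodule.smul_mem _ _ hm)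
      have h4 := Submodule.smul_mem W Q⁻¹ h3
      rwa [smul_smul, inv_mul_cancel₀ hQ, one_smul] at h4
    have key2 : u * m₀ ∈ W → m₀ ∈ W := by
      intro hm
      have h1 := hWst h hhG (u * m₀) hm
      rw [hconjh (u * m₀) hum₀V₃] at h1
      have huum : u * (u * m₀) = d • m₀ := by
        rw [← Matrix.mul_assoc, huu, Matrix.smul_mul, Matrix.one_mul]
      rw [huum, smul_smul] at h1
      have h2 : (Q * d) • m₀ = ((x * x' - d * y * y') • (u * m₀) + (Q * d) • m₀)
          - (x * x' - d * y * y') • (u * m₀) := by abel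
      have h3 : (Q * d) • m₀ ∈ W := by
        rw [h2]; exact Submodule.sub_mem _ h1 (Submodule.smul_mem _ _ hm)
      have h4 := Submodule.smul_mem W (Q * d)⁻¹ h3
      rwa [smul_smul, inv_mul_cancel₀ (mul_ne_zero hQ hd), one_smul] at h4
    have hboth : m₀ ∈ W ∧ u * m₀ ∈ W := by
      have hcj := hWst g₀ hg₀G w hwW
      have hcj' : m₀ * w * m₀' = a • m₀ - b • (u * m₀) := by
        rw [← hab]; exact hconjg₀ a b
      rw [hcj'] at hcj
      have hsum : (2 * a) • m₀ = w + (a • m₀ - b • (u * m₀)) := by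
        rw [← hab]; match_scalars <;> ring
      have hdiff : (2 * b) • (u * m₀) = w - (a • m₀ - b • (u * m₀)) := by
        rw [← hab]; match_scalars <;> ring
      have hsummem : (2 * a) • m₀ ∈ W := by rw [hsum]; exact Submodule.add_mem _ hwW hcj
      have hdiffmem : (2 * b) • (u * m₀) ∈ W := by
        rw [hdiff]; exact Submodule.sub_mem _ hwW hcj
      have hab0 : a ≠ 0 ∨ b ≠ 0 := by
        by_contra hcon
        push_neg at hcon
        apply hw0
        rw [← hab, hcon.1, hcon.2, zero_smul, zero_smul, add_zero]
      rcases hab0 with ha | hb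
      · have hmW : m₀ ∈ W := by
          have h4 := Submodule.smul_mem W (2 * a)⁻¹ hsummem
          rwa [smul_smul, inv_mul_cancel₀ (mul_ne_zero hchar ha), one_smul] at h4
        exact ⟨hmW, key1 hmW⟩
      · have hmW : u * m₀ ∈ W := by
          have h4 := Submodule.smul_mem W (2 * b)⁻¹ hdiffmem
          rwa [smul_smul, inv_mul_cancel₀ (mul_ne_zero hchar hb), one_smul] at h4
        exact ⟨key2 hmW, hmW⟩
    apply le_antisymm hWle
    rw [hV₃span, Submodule.span_le]
    rintro z (rfl | rfl)
    · exact hboth.1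
    · exact hboth.2
  -- V₂ as a span
  have hV₂span : (Subalgebra.toSubmodule R ⊓
      LinearMap.ker (Matrix.traceLinearMap (Fin 2) (ZMod ℓ) (ZMod ℓ)))
      = Submodule.span (ZMod ℓ) {u} := by
    apply le_antisymm
    · intro w hw
      obtain ⟨b, hb⟩ := (memV₂ w).mp hw
      exact Submodule.mem_span_singleton.mpr ⟨b, hb⟩
    · rw [Submodule.span_le, Set.singleton_subset_iff]
      exact (memV₂ u).mpr ⟨1, one_smul _ _⟩
  have hsup12 : Submodule.span (ZMod ℓ) {(1 : Matrix (Fin 2) (Fin 2) (ZMod ℓ))} ⊔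
      (Subalgebra.toSubmodule R ⊓
        LinearMap.ker (Matrix.traceLinearMap (Fin 2) (ZMod ℓ) (ZMod ℓ)))
      = Subalgebra.toSubmodule R := by
    rw [hV₂span, ← Submodule.span_union, Set.singleton_union]
    exact hspan.symm
  refine ⟨V₃, hstab1, hstab2, hstab3, hrkV₃, hirr, ?_, ?_, ?_, ?_, ?_, ?_⟩
  · rw [hsup12]
    exact hsup
  · rw [eq_bot_iff]
    rintro z ⟨hz1, hz2⟩
    obtain ⟨c, hc⟩ := Submodule.mem_span_singleton.mp hz1
    have htrz : trace z = 0 := hz2.2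
    have hc2 : c * 2 = 0 := by
      have := congrArg Matrix.trace hc
      rw [Matrix.trace_smul, htr1] at this
      rw [← htrz, ← this]
      simp [smul_eq_mul]
    have hc0 : c = 0 := by
      rcases mul_eq_zero.mp hc2 with h' | h'
      · exact h'
      · exact absurd h' hchar
    rw [Submodule.mem_bot, ← hc, hc0, zero_smul]
  · rw [hsup12]
    exact hinf
  · rintro ⟨e, he⟩
    set v₁ : Submodule.span (ZMod ℓ) {(1 : Matrix (Fin 2) (Fin 2) (ZMod ℓ))} :=
      ⟨1, Submodule.mem_span_singleton_self 1⟩ with hv₁_def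
    have hcond : m₀ * ((v₁ : Matrix (Fin 2) (Fin 2) (ZMod ℓ))) * m₀'
        = (v₁ : Matrix (Fin 2) (Fin 2) (ZMod ℓ)) := by
      show m₀ * 1 * m₀' = 1
      rw [Matrix.mul_one]
      exact hm₀m₀'
    have h2 := he g₀ hg₀G v₁ v₁ hcond
    obtain ⟨c, hc⟩ := (memV₂ _).mp (e v₁).2
    rw [← hc] at h2
    have h3 : m₀ * (c • u) * m₀' = (-c) • u := by
      rw [Matrix.mul_smul, Matrix.smul_mul, hconj₀, smul_neg, neg_smul]
    have h4 : ((-c) : ZMod ℓ) • u = c • u := by rw [← h3]; exact h2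
    have h5 : (c - (-c)) • u = 0 := by rw [sub_smul, h4, sub_self]
    have h6 : (2 * c) • u = 0 := by
      have : c - (-c) = 2 * c := by ring
      rwa [this] at h5
    have hc0 : c = 0 := by
      rcases smul_eq_zero.mp h6 with h' | h'
      · rcases mul_eq_zero.mp h' with h'' | h''
        · exact absurd h'' hchar
        · exact h''
      · exact absurd h' hu0
    have hez : e v₁ = 0 := by
      have : (e v₁ : Matrix (Fin 2) (Fin 2) (ZMod ℓ)) = 0 := by
        rw [← hc, hc0, zero_smul]
      exact Subtype.ext this
    have : v₁ = 0 := by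
      have := e.map_eq_zero_iff.mp hez
      exact this
    have h1 : (1 : Matrix (Fin 2) (Fin 2) (ZMod ℓ)) = 0 := congrArg Subtype.val this
    exact h1M h1
  · rintro ⟨e, -⟩
    have hfr := LinearEquiv.finrank_eq e
    rw [finrank_span_singleton h1M, hrkV₃] at hfr
    omega
  · rintro ⟨e, -⟩
    have hfr := LinearEquiv.finrank_eq e
    rw [hV₂span, finrank_span_singleton hu0, hrkV₃] at hfr
    omega
end
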